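/- arXiv:2308.09406 — 6 statements merged into one kernel-verified Lean document; each statement's English description precedes it below -/
import Mathlib

section
/- Let α ∈ (0,1) and c > 0, and let ξ be a one-sided α-stable random variable with Laplace transform E[exp(-λξ)] = exp(-λ^α c) for λ ≥ 0. Then ξ^{-α} has an α-Mittag-Leffler distribution: for every complex z, E[exp(z ξ^{-α})] = ∑_{n≥0} (z/c)^n / Γ(1+nα). In particular, the n-th moment of ξ^{-α} equals n!/(c^n Γ(1+nα)). -/
open MeasureTheory Filter Topology

lemma aux_ml_summable {α : ℝ} (hα : 0 < α) {r : ℝ} (hr : 0 ≤ r) :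
    Summable (fun n : ℕ => r ^ n / Real.Gamma (1 + n * α)) := by
  obtain ⟨M, hM⟩ : ∃ M : ℕ, r < ((M : ℝ) + 1) ^ α := by
    refine ⟨⌈(r + 1) ^ (1 / α)⌉₊, ?_⟩
    have h1 : (r + 1) ^ (1 / α) ≤ (⌈(r + 1) ^ (1 / α)⌉₊ : ℝ) + 1 :=
      (Nat.le_ceil _).trans (by linarith)
    have h2 : ((r + 1) ^ (1 / α)) ^ α ≤ (((⌈(r + 1) ^ (1 / α)⌉₊ : ℝ) + 1)) ^ α :=
      Real.rpow_le_rpow (Real.rpow_nonneg (by linarith) _) h1 hα.le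
    rw [← Real.rpow_mul (by linarith), one_div_mul_cancel hα.ne', Real.rpow_one] at h2
    linarith
  set B : ℝ := (M : ℝ) + 1 with hB
  have hB1 : (1 : ℝ) ≤ B := by simp [hB]
  have hBα : 0 < B ^ α := Real.rpow_pos_of_pos (by linarith) _
  set q : ℝ := r / B ^ α with hq
  have hq0 : 0 ≤ q := div_nonneg hr hBα.le
  have hq1 : q < 1 := (div_lt_one hBα).mpr hM
  set N : ℕ := ⌈((M : ℝ) + 1) / α⌉₊ with hN
  have hΓpos : ∀ n : ℕ, 0 < Real.Gamma (1 + n * α) := fun n =>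
    Real.Gamma_pos_of_pos (by have := mul_nonneg (n.cast_nonneg : (0:ℝ) ≤ n) hα.le; linarith)
  have key : ∀ n : ℕ, N ≤ n → r ^ n / Real.Gamma (1 + n * α) ≤ B ^ ((M : ℝ) + 1) * q ^ n := by
    intro n hn
    set x : ℝ := (n : ℝ) * α with hx
    have hxM : (M : ℝ) + 1 ≤ x := by
      have h1 : ((M : ℝ) + 1) / α ≤ (N : ℝ) := Nat.le_ceil _
      have h2 : (N : ℝ) ≤ (n : ℝ) := Nat.cast_le.mpr hn
      rw [div_le_iff₀ hα] at h1
      calc (M : ℝ) + 1 ≤ (N : ℝ) * α := h1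
        _ ≤ (n : ℝ) * α := by nlinarith
    set k : ℕ := ⌊x⌋₊ with hk
    have hkM : M + 1 ≤ k := Nat.le_floor (by push_cast; linarith)
    have hkx : (k : ℝ) ≤ x := Nat.floor_le (by linarith)
    have hxk : x < (k : ℝ) + 1 := Nat.lt_floor_add_one x
    -- Gamma lower bound
    have hmono := Real.Gamma_strictMonoOn_Ici.monotoneOn
    have hΓ1 : Real.Gamma ((k : ℝ) + 1) ≤ Real.Gamma (1 + x) := by
      have := hmono (a := (k : ℝ) + 1) (b := 1 + x) ?_ ?_ (by linarith)
      · exact this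
      · simp only [Set.mem_Ici]
        have : (1 : ℝ) ≤ (k : ℝ) := by exact_mod_cast Nat.one_le_iff_ne_zero.mpr (by omega)
        linarith
      · simp only [Set.mem_Ici]; linarith
    rw [Real.Gamma_nat_eq_factorial] at hΓ1
    -- factorial lower bound
    have hfac : ((M + 1 : ℕ) : ℝ) ^ (k - M) ≤ (k.factorial : ℝ) := by
      have h := Nat.factorial_mul_pow_le_factorial (m := M) (n := k - M)
      rw [Nat.add_sub_cancel' (by omega : M ≤ k)] at h
      calc ((M + 1 : ℕ) : ℝ) ^ (k - M) ≤ ((M.factorial * (M + 1) ^ (k - M) : ℕ) : ℝ) := by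
            push_cast
            have : (1 : ℝ) ≤ (M.factorial : ℝ) := by exact_mod_cast M.factorial_pos
            nlinarith [pow_nonneg (by positivity : (0:ℝ) ≤ (M:ℝ) + 1) (k - M)]
        _ ≤ (k.factorial : ℝ) := by exact_mod_cast h
    have hcast : ((M + 1 : ℕ) : ℝ) ^ (k - M) = B ^ (((k : ℝ) - M)) := by
      rw [← Real.rpow_natCast (((M + 1 : ℕ) : ℝ)) (k - M)]
      push_cast [Nat.cast_sub (by omega : M ≤ k)]
      norm_num
      rw [hB]
    have hBx : B ^ ((x : ℝ) - ((M : ℝ) + 1)) ≤ B ^ (((k : ℝ) - M)) :=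
      Real.rpow_le_rpow_of_exponent_le hB1 (by linarith)
    have hBxval : B ^ ((x : ℝ) - ((M : ℝ) + 1)) = (B ^ α) ^ n * (B ^ ((M : ℝ) + 1))⁻¹ := by
      rw [Real.rpow_sub (by linarith), hx, mul_comm (n : ℝ) α, Real.rpow_mul (by linarith),
        Real.rpow_natCast]
      ring
    have hΓlb : (B ^ α) ^ n * (B ^ ((M : ℝ) + 1))⁻¹ ≤ Real.Gamma (1 + n * α) := by
      calc (B ^ α) ^ n * (B ^ ((M : ℝ) + 1))⁻¹ = B ^ ((x : ℝ) - ((M : ℝ) + 1)) := hBxval.symm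
        _ ≤ B ^ (((k : ℝ) - M)) := hBx
        _ = ((M + 1 : ℕ) : ℝ) ^ (k - M) := hcast.symm
        _ ≤ (k.factorial : ℝ) := hfac
        _ ≤ Real.Gamma (1 + x) := hΓ1
        _ = Real.Gamma (1 + n * α) := by rw [hx]
    have hpos : (0 : ℝ) < (B ^ α) ^ n * (B ^ ((M : ℝ) + 1))⁻¹ := by positivity
    calc r ^ n / Real.Gamma (1 + n * α) ≤ r ^ n / ((B ^ α) ^ n * (B ^ ((M : ℝ) + 1))⁻¹) :=
          div_le_div_of_nonneg_left (pow_nonneg hr n) hpos hΓlb |>.trans_eq rfl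
      _ = B ^ ((M : ℝ) + 1) * q ^ n := by
          rw [hq, div_pow, div_mul_eq_div_div, div_inv_eq_mul]
          ring
  have hgeom : Summable (fun n : ℕ => B ^ ((M : ℝ) + 1) * q ^ n) :=
    (summable_geometric_of_lt_one hq0 hq1).mul_left _
  have hshift : Summable (fun m : ℕ => r ^ (m + N) / Real.Gamma (1 + (m + N : ℕ) * α)) := by
    refine Summable.of_nonneg_of_le (fun m => by positivity) (fun m => ?_)
      ((summable_nat_add_iff N).mpr hgeom)
    · exact le_of_le_of_eq (key (m + N) (by omega)) (by push_cast; ring_nf)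
  exact (summable_nat_add_iff N).mp hshift

lemma aux_moment {Ω : Type*} [MeasurableSpace Ω] (P : Measure Ω) [IsProbabilityMeasure P]
    (α c : ℝ) (hα : α ∈ Set.Ioo (0:ℝ) 1) (hc : 0 < c)
    (ξ : Ω → ℝ) (hξmeas : Measurable ξ) (hξpos : ∀ᵐ ω ∂P, 0 < ξ ω)
    (hLaplace : ∀ l : ℝ, 0 ≤ l →
      ∫ ω, Real.exp (-l * ξ ω) ∂P = Real.exp (-(l ^ α) * c)) (n : ℕ) :
    ∫⁻ ω, ENNReal.ofReal (ξ ω ^ (-((n:ℝ) * α))) ∂P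
      = ENNReal.ofReal ((n.factorial : ℝ) / (c ^ n * Real.Gamma (1 + n * α))) := by
  obtain ⟨hα0, hα1⟩ := hα
  rcases Nat.eq_zero_or_pos n with hn | hn
  · subst hn
    simp [Real.Gamma_one]
  -- now 1 ≤ n
  have hnR : (0 : ℝ) < (n : ℝ) := by exact_mod_cast hn
  set s : ℝ := (n : ℝ) * α with hsdef
  have hs : 0 < s := by positivity
  have hΓs : 0 < Real.Gamma s := Real.Gamma_pos_of_pos hs
  -- integrability of exp(-t ξ) and its Laplace value as a lintegral
  have hexpint : ∀ t : ℝ, 0 ≤ t → Integrable (fun ω => Real.exp (-t * ξ ω)) P := by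
    intro t ht
    refine Integrable.mono' (integrable_const 1)
      ((hξmeas.const_mul (-t)).exp.aestronglyMeasurable) ?_
    filter_upwards [hξpos] with ω hω
    rw [Real.norm_eq_abs, abs_of_pos (Real.exp_pos _)]
    rw [Real.exp_le_one_iff]
    nlinarith
  have hlap : ∀ t : ℝ, 0 ≤ t →
      ∫⁻ ω, ENNReal.ofReal (Real.exp (-t * ξ ω)) ∂P
        = ENNReal.ofReal (Real.exp (-(t ^ α) * c)) := by
    intro t ht
    rw [← ofReal_integral_eq_lintegral_ofReal (hexpint t ht)
      (Filter.Eventually.of_forall fun ω => (Real.exp_pos _).le), hLaplace t ht]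
  -- pointwise Gamma identity
  have key : ∀ b : ℝ, 0 < b →
      ENNReal.ofReal (b ^ (-s)) = ENNReal.ofReal (1 / Real.Gamma s) *
        ∫⁻ t in Set.Ioi (0:ℝ), ENNReal.ofReal (t ^ (s-1) * Real.exp (-t * b)) := by
    intro b hb
    have hInt : IntegrableOn (fun t : ℝ => t ^ (s-1) * Real.exp (-t * b)) (Set.Ioi 0) := by
      have h := integrableOn_rpow_mul_exp_neg_mul_rpow (p := 1) (s := s-1) (b := b)
        (by linarith) one_pos hb
      have heq : (fun t : ℝ => t ^ (s-1) * Real.exp (-b * t ^ (1:ℝ)))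
          = fun t : ℝ => t ^ (s-1) * Real.exp (-t * b) := by
        funext t; rw [Real.rpow_one, neg_mul, neg_mul, mul_comm b t]
      rwa [heq] at h
    have hval : ∫ t in Set.Ioi (0:ℝ), t ^ (s-1) * Real.exp (-t * b)
        = b ^ (-s) * Real.Gamma s := by
      have h := Real.integral_rpow_mul_exp_neg_mul_Ioi hs hb
      have heq : (fun t : ℝ => t ^ (s-1) * Real.exp (-(b * t)))
          = fun t : ℝ => t ^ (s-1) * Real.exp (-t * b) := by
        funext t; rw [neg_mul, mul_comm b t]
      rw [heq] at h
      rw [h, one_div, Real.inv_rpow hb.le, ← Real.rpow_neg hb.le]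
    have hnn : 0 ≤ᵐ[volume.restrict (Set.Ioi (0:ℝ))]
        fun t : ℝ => t ^ (s-1) * Real.exp (-t * b) := by
      filter_upwards [ae_restrict_mem measurableSet_Ioi] with t ht
      exact mul_nonneg (Real.rpow_nonneg (le_of_lt ht) _) (Real.exp_pos _).le
    rw [← ofReal_integral_eq_lintegral_ofReal hInt hnn, hval, ← ENNReal.ofReal_mul
      (by positivity)]
    congr 1
    field_simp
  -- integrability of the outer integrand
  have hInt2 : IntegrableOn (fun t : ℝ => t ^ (s-1) * Real.exp (-c * t ^ α)) (Set.Ioi 0) := by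
    have base : IntegrableOn (fun y : ℝ => y ^ (s/α - 1) * Real.exp (-c * y)) (Set.Ioi 0) := by
      have h := integrableOn_rpow_mul_exp_neg_mul_rpow (p := 1) (s := s/α - 1) (b := c)
        (by have : 0 < s/α := div_pos hs hα0; linarith) one_pos hc
      have heq : (fun y : ℝ => y ^ (s/α-1) * Real.exp (-c * y ^ (1:ℝ)))
          = fun y : ℝ => y ^ (s/α-1) * Real.exp (-c * y) := by
        funext y; rw [Real.rpow_one]
      rwa [heq] at h
    have h := (integrableOn_Ioi_comp_rpow_iff'
      (fun y : ℝ => y ^ (s/α - 1) * Real.exp (-c * y)) (p := α) hα0.ne').mpr base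
    refine h.congr_fun (fun t ht => ?_) measurableSet_Ioi
    have ht' : (0:ℝ) < t := ht
    have hexp : α * (s/α - 1) = s - α := by field_simp
    beta_reduce
    rw [smul_eq_mul, ← Real.rpow_mul ht'.le, hexp, ← mul_assoc, ← Real.rpow_add ht']
    ring_nf
  have hnn2 : 0 ≤ᵐ[volume.restrict (Set.Ioi (0:ℝ))]
      fun t : ℝ => t ^ (s-1) * Real.exp (-c * t ^ α) := by
    filter_upwards [ae_restrict_mem measurableSet_Ioi] with t ht
    exact mul_nonneg (Real.rpow_nonneg (le_of_lt ht) _) (Real.exp_pos _).le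
  have hF : Measurable (Function.uncurry fun (ω : Ω) (t : ℝ) =>
      ENNReal.ofReal (t ^ (s-1) * Real.exp (-t * ξ ω))) := by
    apply Measurable.ennreal_ofReal
    have : Measurable fun p : Ω × ℝ => p.2 ^ (s-1) * Real.exp (-p.2 * ξ p.1) := by fun_prop
    exact this
  calc ∫⁻ ω, ENNReal.ofReal (ξ ω ^ (-s)) ∂P
      = ∫⁻ ω, ENNReal.ofReal (1 / Real.Gamma s) *
          (∫⁻ t in Set.Ioi (0:ℝ), ENNReal.ofReal (t ^ (s-1) * Real.exp (-t * ξ ω))) ∂P := by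
        refine lintegral_congr_ae ?_
        filter_upwards [hξpos] with ω hω
        exact key (ξ ω) hω
    _ = ENNReal.ofReal (1 / Real.Gamma s) *
          ∫⁻ ω, (∫⁻ t in Set.Ioi (0:ℝ), ENNReal.ofReal (t ^ (s-1) * Real.exp (-t * ξ ω))) ∂P :=
        lintegral_const_mul' _ _ ENNReal.ofReal_ne_top
    _ = ENNReal.ofReal (1 / Real.Gamma s) *
          ∫⁻ t in Set.Ioi (0:ℝ), (∫⁻ ω, ENNReal.ofReal (t ^ (s-1) * Real.exp (-t * ξ ω)) ∂P) := by
        congr 1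
        exact lintegral_lintegral_swap hF.aemeasurable
    _ = ENNReal.ofReal (1 / Real.Gamma s) *
          ∫⁻ t in Set.Ioi (0:ℝ), ENNReal.ofReal (t ^ (s-1) * Real.exp (-c * t ^ α)) := by
        congr 1
        refine setLIntegral_congr_fun measurableSet_Ioi
          (fun t ht => ?_)
        have ht' : (0:ℝ) < t := ht
        simp_rw [ENNReal.ofReal_mul (Real.rpow_nonneg ht'.le _)]
        rw [lintegral_const_mul' _ _ ENNReal.ofReal_ne_top, hlap t ht'.le,
          show -t ^ α * c = -c * t ^ α from by ring]
    _ = ENNReal.ofReal (1 / Real.Gamma s) *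
          ENNReal.ofReal (∫ t in Set.Ioi (0:ℝ), t ^ (s-1) * Real.exp (-c * t ^ α)) := by
        rw [← ofReal_integral_eq_lintegral_ofReal hInt2 hnn2]
    _ = ENNReal.ofReal ((n.factorial : ℝ) / (c ^ n * Real.Gamma (1 + n * α))) := by
        rw [integral_rpow_mul_exp_neg_mul_rpow hα0 (by linarith) hc,
          ← ENNReal.ofReal_mul (by positivity)]
        congr 1
        have h1 : s - 1 + 1 = s := by ring
        have h2 : s/α = (n:ℝ) := by rw [hsdef]; field_simp
        have h3 : Real.Gamma ((n:ℝ)) = ((n-1).factorial : ℝ) := by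
          rw [show ((n:ℝ)) = ((n-1:ℕ):ℝ) + 1 by push_cast [Nat.cast_sub hn]; ring]
          exact Real.Gamma_nat_eq_factorial _
        have h5 : Real.Gamma (1+s) = s * Real.Gamma s := by
          rw [add_comm, Real.Gamma_add_one hs.ne']
        have h6 : (n.factorial : ℝ) = n * ((n-1).factorial : ℝ) := by
          exact_mod_cast (Nat.mul_factorial_pred hn.ne').symm
        rw [h1, neg_div, h2, Real.rpow_neg hc.le, Real.rpow_natCast, h3, h5, h6, hsdef]
        have hfacpos : (0:ℝ) < ((n-1).factorial : ℝ) := by exact_mod_cast (n-1).factorial_pos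
        field_simp

/-- Mittag-Leffler moments/MGF of `ξ^{-α}` for a one-sided α-stable ξ. -/
theorem stable_inv_rpow_mittagLeffler
    {Ω : Type*} [MeasurableSpace Ω] (P : Measure Ω) [IsProbabilityMeasure P]
    (α c : ℝ) (hα : α ∈ Set.Ioo (0:ℝ) 1) (hc : 0 < c)
    (ξ : Ω → ℝ) (hξmeas : Measurable ξ) (hξpos : ∀ᵐ ω ∂P, 0 < ξ ω)
    (hLaplace : ∀ l : ℝ, 0 ≤ l →
      ∫ ω, Real.exp (-l * ξ ω) ∂P = Real.exp (-(l ^ α) * c)) :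
    (∀ z : ℂ, ∫ ω, Complex.exp (z * Complex.ofReal ((ξ ω) ^ (-α))) ∂P
        = ∑' n : ℕ, (z / (c : ℂ)) ^ n / ((Real.Gamma (1 + n * α) : ℂ))) ∧
    (∀ n : ℕ, ∫ ω, (ξ ω) ^ (-((n : ℝ) * α)) ∂P
        = (Nat.factorial n : ℝ) / (c ^ n * Real.Gamma (1 + n * α))) := by
  have hΓpos : ∀ n : ℕ, 0 < Real.Gamma (1 + n * α) := fun n =>
    Real.Gamma_pos_of_pos (by nlinarith [mul_nonneg (n.cast_nonneg : (0:ℝ) ≤ (n:ℝ)) hα.1.le])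
  have hmom := aux_moment P α c hα hc ξ hξmeas hξpos hLaplace
  have hmeasn : ∀ n : ℕ, Measurable fun ω => ξ ω ^ (-((n:ℝ) * α)) := by
    intro n; fun_prop
  have hnn : ∀ n : ℕ, 0 ≤ᵐ[P] fun ω => ξ ω ^ (-((n:ℝ) * α)) := fun n =>
    hξpos.mono fun ω hω => Real.rpow_nonneg hω.le _
  have hval : ∀ n : ℕ, (0:ℝ) ≤ (n.factorial : ℝ) / (c ^ n * Real.Gamma (1 + n * α)) := fun n =>
    div_nonneg (Nat.cast_nonneg _) (mul_pos (pow_pos hc n) (hΓpos n)).le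
  have part2 : ∀ n : ℕ, ∫ ω, (ξ ω) ^ (-((n : ℝ) * α)) ∂P
      = (Nat.factorial n : ℝ) / (c ^ n * Real.Gamma (1 + n * α)) := by
    intro n
    rw [integral_eq_lintegral_of_nonneg_ae (hnn n) (hmeasn n).aestronglyMeasurable, hmom n,
      ENNReal.toReal_ofReal (hval n)]
  refine ⟨?_, part2⟩
  intro z
  set f : ℕ → Ω → ℂ := fun n ω => (z * Complex.ofReal (ξ ω ^ (-α))) ^ n / (n.factorial : ℂ)
    with hf
  have hexp : ∀ ω, Complex.exp (z * Complex.ofReal (ξ ω ^ (-α))) = ∑' n, f n ω := by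
    intro ω
    rw [Complex.exp_eq_exp_ℂ, NormedSpace.exp_eq_tsum_div]
  have hfmeas : ∀ n, AEStronglyMeasurable (f n) P := by
    intro n
    apply Measurable.aestronglyMeasurable
    apply Measurable.div_const
    apply Measurable.pow_const
    exact (Complex.measurable_ofReal.comp (by fun_prop : Measurable fun ω => ξ ω ^ (-α))).const_mul z
  have hpow : ∀ ω, 0 < ξ ω → ∀ n : ℕ, (ξ ω ^ (-α)) ^ n = ξ ω ^ (-((n:ℝ) * α)) := by
    intro ω hω n
    rw [← Real.rpow_natCast (ξ ω ^ (-α)) n, ← Real.rpow_mul hω.le]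
    congr 1; ring
  have hlint : ∀ n : ℕ, ∫⁻ ω, ‖f n ω‖₊ ∂P
      = ENNReal.ofReal ((‖z‖ / c) ^ n / Real.Gamma (1 + n * α)) := by
    intro n
    have h1 : ∫⁻ ω, ‖f n ω‖₊ ∂P = ∫⁻ ω, ENNReal.ofReal (‖z‖ ^ n / (n.factorial : ℝ)
        * ξ ω ^ (-((n:ℝ)*α))) ∂P := by
      apply lintegral_congr_ae
      filter_upwards [hξpos] with ω hω
      rw [← enorm_eq_nnnorm, ← ofReal_norm]
      congr 1
      rw [hf]
      simp only [norm_div, norm_pow, norm_mul, Complex.norm_real, Complex.norm_natCast,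
        Real.norm_eq_abs, abs_of_nonneg (Real.rpow_nonneg hω.le (-α))]
      rw [mul_pow, hpow ω hω n]
      ring
    rw [h1]
    simp_rw [ENNReal.ofReal_mul (by positivity : (0:ℝ) ≤ ‖z‖ ^ n / (n.factorial : ℝ))]
    rw [lintegral_const_mul' _ _ ENNReal.ofReal_ne_top, hmom n,
      ← ENNReal.ofReal_mul (by positivity)]
    congr 1
    have hfac : ((n.factorial : ℝ)) ≠ 0 := by exact_mod_cast n.factorial_ne_zero
    rw [div_pow]
    field_simp
  have hsum : Summable fun n : ℕ => (‖z‖ / c) ^ n / Real.Gamma (1 + n * α) :=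
    aux_ml_summable hα.1 (by positivity)
  have htsum_ne : (∑' n, ∫⁻ ω, ‖f n ω‖₊ ∂P) ≠ ⊤ := by
    have h2 : (∑' n, ∫⁻ ω, ‖f n ω‖₊ ∂P)
        = ENNReal.ofReal (∑' n : ℕ, (‖z‖ / c) ^ n / Real.Gamma (1 + n * α)) := by
      rw [ENNReal.ofReal_tsum_of_nonneg (fun n => div_nonneg (by positivity) (hΓpos n).le) hsum]
      exact tsum_congr fun n => (hlint n)
    rw [h2]; exact ENNReal.ofReal_ne_top
  calc ∫ ω, Complex.exp (z * Complex.ofReal (ξ ω ^ (-α))) ∂P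
      = ∫ ω, (∑' n, f n ω) ∂P := by simp_rw [hexp]
    _ = ∑' n, ∫ ω, f n ω ∂P := integral_tsum hfmeas htsum_ne
    _ = ∑' n : ℕ, (z / (c : ℂ)) ^ n / ((Real.Gamma (1 + n * α) : ℂ)) := by
        refine tsum_congr fun n => ?_
        have h3 : ∫ ω, f n ω ∂P = (z ^ n / (n.factorial : ℂ)) *
            ((∫ ω, ξ ω ^ (-((n:ℝ) * α)) ∂P : ℝ) : ℂ) := by
          have hco : ∫ ω, ((ξ ω ^ (-((n:ℝ) * α)) : ℝ) : ℂ) ∂P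
              = ((∫ ω, ξ ω ^ (-((n:ℝ) * α)) ∂P : ℝ) : ℂ) := integral_ofReal
          rw [← hco, ← smul_eq_mul, ← integral_smul]
          apply integral_congr_ae
          filter_upwards [hξpos] with ω hω
          rw [hf, smul_eq_mul]
          simp only []
          rw [← hpow ω hω n]
          push_cast
          ring
        rw [h3, part2 n]
        have hΓ := hΓpos n
        have hfac : ((n.factorial : ℂ)) ≠ 0 := by exact_mod_cast n.factorial_ne_zero
        have hΓc : ((Real.Gamma (1 + n * α) : ℂ)) ≠ 0 := by
          exact_mod_cast Complex.ofReal_ne_zero.mpr hΓ.ne'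
        have hcc : ((c : ℂ)) ≠ 0 := Complex.ofReal_ne_zero.mpr hc.ne'
        push_cast
        rw [div_pow]
        field_simp
end

section
/- Let d ∈ ℕ, α ∈ (0,1), and let U_1, …, U_d, W be defined by the Barlow–Pitman–Yor construction: for every bounded measurable g, E[g(U_1,…,U_d,W)] = E[ g(ξ_1/η, …, ξ_d/η, η^{-α}) · Γ(1+α) η^{-α} ], where ξ_1,…,ξ_d are independent one-sided α-stable random variables with E[exp(-λξ_j)] = exp(-λ^α β_j), ∑_j β_j = 1, and η = ξ_1 + ⋯ + ξ_d. Then this indeed defines a probability distribution, i.e. E[Γ(1+α) η^{-α}] = 1, and moreover U_1 + ⋯ + U_d = 1 almost surely. -/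
open MeasureTheory Filter Topology

/-- the Barlow–Pitman–Yor weighting `Γ(1+α) η^{-α}` has expectation 1,
so the BPY construction defines a probability distribution, and the occupation ratios
`ξ_j/η` sum to 1 almost surely. -/
theorem BPY_is_probability
    {Ω : Type*} [MeasurableSpace Ω] (P : Measure Ω) [IsProbabilityMeasure P]
    (d : ℕ) (hd : 1 ≤ d) (α : ℝ) (hα : α ∈ Set.Ioo (0:ℝ) 1)
    (β : Fin d → ℝ) (hβ : ∀ j, β j ∈ Set.Ioo (0:ℝ) 1) (hβsum : ∑ j, β j = 1)
    (ξ : Fin d → Ω → ℝ) (hmeas : ∀ j, Measurable (ξ j))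
    (hpos : ∀ j, ∀ᵐ ω ∂P, 0 < ξ j ω)
    (hindep : ProbabilityTheory.iIndepFun ξ P)
    (hL : ∀ j, ∀ l : ℝ, 0 ≤ l →
      ∫ ω, Real.exp (-l * ξ j ω) ∂P = Real.exp (-(l ^ α) * β j)) :
    (∫ ω, Real.Gamma (1 + α) * (∑ j, ξ j ω) ^ (-α) ∂P = 1) ∧
    (∀ᵐ ω ∂P, ∑ j, ξ j ω / (∑ i, ξ i ω) = 1) := by
  obtain ⟨hα0, hα1⟩ := hα
  have hne : Nonempty (Fin d) := ⟨⟨0, hd⟩⟩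
  set η : Ω → ℝ := fun ω => ∑ j, ξ j ω with hη
  have hηmeas : Measurable η := by
    apply Finset.measurable_sum
    exact fun j _ => hmeas j
  have hηpos : ∀ᵐ ω ∂P, 0 < η ω := by
    have h := (MeasureTheory.ae_all_iff).2 hpos
    filter_upwards [h] with ω hω
    exact Finset.sum_pos (fun j _ => hω j) Finset.univ_nonempty
  -- second claim
  have hsum1 : ∀ᵐ ω ∂P, ∑ j, ξ j ω / (∑ i, ξ i ω) = 1 := by
    filter_upwards [hηpos] with ω hω
    rw [← Finset.sum_div]
    exact div_self (ne_of_gt hω)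
  refine ⟨?_, hsum1⟩
  -- Laplace transform of η
  have hLap : ∀ t : ℝ, 0 < t → ∫ ω, Real.exp (-(η ω * t)) ∂P = Real.exp (-(t ^ α)) := by
    intro t ht
    have hmgf := ProbabilityTheory.iIndepFun.mgf_sum (t := -t) hindep hmeas Finset.univ
    have h1 : ProbabilityTheory.mgf (∑ i, ξ i) P (-t) = ∫ ω, Real.exp (-(η ω * t)) ∂P := by
      unfold ProbabilityTheory.mgf
      congr 1
      ext ω
      simp [hη, Finset.sum_apply]
      ring_nf
    have h2 : ∀ i : Fin d, ProbabilityTheory.mgf (ξ i) P (-t) = Real.exp (-(t ^ α) * β i) := by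
      intro i
      unfold ProbabilityTheory.mgf
      rw [← hL i t ht.le]
    rw [h1] at hmgf
    rw [hmgf]
    have : ∀ i : Fin d, i ∈ Finset.univ → ProbabilityTheory.mgf (ξ i) P (-t)
        = Real.exp (-(t ^ α) * β i) := fun i _ => h2 i
    rw [Finset.prod_congr rfl this, ← Real.exp_sum, ← Finset.mul_sum, hβsum, mul_one]
  -- pointwise Gamma representation : for x > 0,
  -- ∫ t in Ioi 0, t^(α-1) * exp (-(x*t)) = Γ α * x^(-α)
  have hΓα : 0 < Real.Gamma α := Real.Gamma_pos_of_pos hα0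
  have hrep : ∀ x : ℝ, 0 < x →
      ∫⁻ t in Set.Ioi (0:ℝ), ENNReal.ofReal (t ^ (α - 1) * Real.exp (-(x * t)))
        = ENNReal.ofReal (Real.Gamma α) * ENNReal.ofReal (x ^ (-α)) := by
    intro x hx
    have hval : ∫ t in Set.Ioi (0:ℝ), t ^ (α - 1) * Real.exp (-(x * t))
        = (1 / x) ^ α * Real.Gamma α := Real.integral_rpow_mul_exp_neg_mul_Ioi hα0 hx
    have hposval : (0:ℝ) < (1 / x) ^ α * Real.Gamma α := by positivity
    have hint : IntegrableOn (fun t : ℝ => t ^ (α - 1) * Real.exp (-(x * t)))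
        (Set.Ioi (0:ℝ)) := by
      by_contra hc
      rw [MeasureTheory.integral_undef hc] at hval
      exact absurd hval.symm (ne_of_gt hposval)
    have hnonneg : ∀ᵐ t ∂(volume.restrict (Set.Ioi (0:ℝ))),
        0 ≤ t ^ (α - 1) * Real.exp (-(x * t)) := by
      filter_upwards [ae_restrict_mem measurableSet_Ioi] with t ht
      have : (0:ℝ) < t := ht
      positivity
    rw [← MeasureTheory.ofReal_integral_eq_lintegral_ofReal hint hnonneg, hval]
    rw [← ENNReal.ofReal_mul hΓα.le]
    congr 1
    rw [one_div, Real.inv_rpow hx.le, ← Real.rpow_neg hx.le, mul_comm]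
  -- the weight function
  have hGmeas : Measurable (fun ω => η ω ^ (-α)) := by fun_prop
  -- Tonelli computation
  have hfmeas : Measurable (fun p : Ω × ℝ =>
      ENNReal.ofReal (p.2 ^ (α - 1) * Real.exp (-(η p.1 * p.2)))) := by
    fun_prop
  have hswap :
      ∫⁻ ω, (∫⁻ t in Set.Ioi (0:ℝ),
          ENNReal.ofReal (t ^ (α - 1) * Real.exp (-(η ω * t)))) ∂P
        = ∫⁻ t in Set.Ioi (0:ℝ),
            (∫⁻ ω, ENNReal.ofReal (t ^ (α - 1) * Real.exp (-(η ω * t))) ∂P) := by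
    exact MeasureTheory.lintegral_lintegral_swap hfmeas.aemeasurable
  -- LHS of hswap
  have hLHS : ∫⁻ ω, (∫⁻ t in Set.Ioi (0:ℝ),
      ENNReal.ofReal (t ^ (α - 1) * Real.exp (-(η ω * t)))) ∂P
      = ENNReal.ofReal (Real.Gamma α) * ∫⁻ ω, ENNReal.ofReal (η ω ^ (-α)) ∂P := by
    rw [← MeasureTheory.lintegral_const_mul _ (hGmeas.ennreal_ofReal)]
    apply lintegral_congr_ae
    filter_upwards [hηpos] with ω hω
    exact hrep (η ω) hω
  -- inner integral of RHS
  have hinner : ∀ t : ℝ, 0 < t →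
      (∫⁻ ω, ENNReal.ofReal (t ^ (α - 1) * Real.exp (-(η ω * t))) ∂P)
        = ENNReal.ofReal (t ^ (α - 1) * Real.exp (-(t ^ α))) := by
    intro t ht
    have hintexp : Integrable (fun ω => Real.exp (-(η ω * t))) P := by
      refine (integrable_const (1:ℝ)).mono' ?_ ?_
      · exact (((hηmeas.mul_const t).neg).exp).aestronglyMeasurable
      · filter_upwards [hηpos] with ω hω
        rw [Real.norm_eq_abs, abs_of_pos (Real.exp_pos _)]
        exact Real.exp_le_one_iff.2 (by nlinarith)
    have hnn : 0 ≤ᵐ[P] fun ω => Real.exp (-(η ω * t)) :=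
      Filter.Eventually.of_forall fun ω => (Real.exp_pos _).le
    calc ∫⁻ ω, ENNReal.ofReal (t ^ (α - 1) * Real.exp (-(η ω * t))) ∂P
        = ∫⁻ ω, ENNReal.ofReal (t ^ (α - 1)) * ENNReal.ofReal (Real.exp (-(η ω * t))) ∂P := by
          simp_rw [ENNReal.ofReal_mul (Real.rpow_nonneg ht.le (α - 1))]
      _ = ENNReal.ofReal (t ^ (α - 1)) * ∫⁻ ω, ENNReal.ofReal (Real.exp (-(η ω * t))) ∂P := by
          rw [MeasureTheory.lintegral_const_mul]
          exact (((hηmeas.mul_const t).neg).exp).ennreal_ofReal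
      _ = ENNReal.ofReal (t ^ (α - 1)) * ENNReal.ofReal (Real.exp (-(t ^ α))) := by
          rw [← MeasureTheory.ofReal_integral_eq_lintegral_ofReal hintexp hnn, hLap t ht]
      _ = ENNReal.ofReal (t ^ (α - 1) * Real.exp (-(t ^ α))) := by
          rw [← ENNReal.ofReal_mul (Real.rpow_nonneg ht.le _)]
  have hRHS : ∫⁻ t in Set.Ioi (0:ℝ),
      (∫⁻ ω, ENNReal.ofReal (t ^ (α - 1) * Real.exp (-(η ω * t))) ∂P)
      = ENNReal.ofReal (1 / α) := by
    have h1 : ∫⁻ t in Set.Ioi (0:ℝ),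
        (∫⁻ ω, ENNReal.ofReal (t ^ (α - 1) * Real.exp (-(η ω * t))) ∂P)
        = ∫⁻ t in Set.Ioi (0:ℝ), ENNReal.ofReal (t ^ (α - 1) * Real.exp (-(t ^ α))) := by
      apply MeasureTheory.setLIntegral_congr_fun measurableSet_Ioi
      exact fun t ht => hinner t ht
    rw [h1]
    have hval : ∫ t in Set.Ioi (0:ℝ), t ^ (α - 1) * Real.exp (-(t ^ α))
        = (1 / α) * Real.Gamma ((α - 1 + 1) / α) := by
      simpa using integral_rpow_mul_exp_neg_rpow hα0 (by linarith : (-1:ℝ) < α - 1)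
    rw [show (α - 1 + 1) / α = 1 by field_simp; ring] at hval
    rw [Real.Gamma_one, mul_one] at hval
    have hposval : (0:ℝ) < 1 / α := by positivity
    have hint : IntegrableOn (fun t : ℝ => t ^ (α - 1) * Real.exp (-(t ^ α)))
        (Set.Ioi (0:ℝ)) := by
      by_contra hc
      rw [MeasureTheory.integral_undef hc] at hval
      exact absurd hval.symm (ne_of_gt hposval)
    have hnonneg : ∀ᵐ t ∂(volume.restrict (Set.Ioi (0:ℝ))),
        0 ≤ t ^ (α - 1) * Real.exp (-(t ^ α)) := by
      filter_upwards [ae_restrict_mem measurableSet_Ioi] with t ht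
      have : (0:ℝ) < t := ht
      positivity
    rw [← MeasureTheory.ofReal_integral_eq_lintegral_ofReal hint hnonneg, hval]
  -- conclude value of ∫⁻ η^{-α}
  have hkey : ∫⁻ ω, ENNReal.ofReal (η ω ^ (-α)) ∂P
      = ENNReal.ofReal (1 / (α * Real.Gamma α)) := by
    have h := hLHS.symm.trans (hswap.trans hRHS)
    -- h : ofReal (Γ α) * ∫⁻ = ofReal (1/α)
    have hΓne : ENNReal.ofReal (Real.Gamma α) ≠ 0 := by
      simp [ENNReal.ofReal_eq_zero, not_le, hΓα]
    have hΓtop : ENNReal.ofReal (Real.Gamma α) ≠ ⊤ := ENNReal.ofReal_ne_top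
    have h2 : ENNReal.ofReal (Real.Gamma α) * ENNReal.ofReal (1 / (α * Real.Gamma α))
        = ENNReal.ofReal (1 / α) := by
      rw [← ENNReal.ofReal_mul hΓα.le]
      congr 1
      field_simp
    rw [← h2] at h
    exact (ENNReal.mul_right_inj hΓne hΓtop).1 h
  -- convert to a real integral
  have hnn : 0 ≤ᵐ[P] fun ω => η ω ^ (-α) := by
    filter_upwards [hηpos] with ω hω
    exact Real.rpow_nonneg hω.le _
  have hreal : ∫ ω, η ω ^ (-α) ∂P = 1 / (α * Real.Gamma α) := by
    rw [MeasureTheory.integral_eq_lintegral_of_nonneg_ae hnn hGmeas.aestronglyMeasurable, hkey]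
    rw [ENNReal.toReal_ofReal (by positivity)]
  have hfinal : ∫ ω, Real.Gamma (1 + α) * η ω ^ (-α) ∂P = 1 := by
    rw [MeasureTheory.integral_const_mul, hreal]
    rw [add_comm, Real.Gamma_add_one (ne_of_gt hα0)]
    field_simp
  exact hfinal
end

section
/- Let b : ℕ → (0,∞) be regularly varying with index α ∈ (0,1), with generalized inverse a_k = min{n : b_n > k}. Then for every c > 1, sup{ | k/b_n − (a_k/n)^α | : k ∈ [b_{n/c}, b_{cn}) } → 0 as n → ∞. -/
open MeasureTheory Filter Topology
open scoped NNReal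

/-- Hölder-type estimate: for `0 ≤ α ≤ 1` and `0 ≤ y ≤ x`,
`x^α - y^α ≤ (x - y)^α`. -/
lemma aux_rpow_sub_le {α x y : ℝ} (hα0 : 0 ≤ α) (hα1 : α ≤ 1)
    (hy : 0 ≤ y) (hxy : y ≤ x) : x ^ α - y ^ α ≤ (x - y) ^ α := by
  have h := NNReal.rpow_add_le_add_rpow (Real.toNNReal (x - y)) (Real.toNNReal y) hα0 hα1
  rw [← Real.toNNReal_add (by linarith) hy] at h
  have h2 : ((Real.toNNReal (x - y + y) ^ α : ℝ≥0) : ℝ)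
      ≤ ((Real.toNNReal (x - y) ^ α : ℝ≥0) : ℝ) + ((Real.toNNReal y ^ α : ℝ≥0) : ℝ) := by
    exact_mod_cast h
  rw [NNReal.coe_rpow, NNReal.coe_rpow, NNReal.coe_rpow,
    Real.coe_toNNReal _ (by linarith), Real.coe_toNNReal _ (by linarith),
    Real.coe_toNNReal _ hy] at h2
  have : x - y + y = x := by ring
  rw [this] at h2
  linarith

/-- Uniform convergence of `b (lam * n) / b n` to `lam ^ α` on compact
intervals of `lam`, for monotone regularly varying `b`. -/
lemma aux_uniform
    (α : ℝ) (hα : α ∈ Set.Ioo (0:ℝ) 1)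
    (b : ℝ → ℝ) (hbpos : ∀ t, 0 < b t) (hbmono : Monotone b)
    (hreg : ∀ lam : ℝ, 0 < lam →
      Tendsto (fun t => b (lam * t) / b t) atTop (nhds (lam ^ α)))
    (L : ℝ) (hL : 1 < L) (ε : ℝ) (hε : 0 < ε) :
    ∀ᶠ n : ℕ in atTop, ∀ lam ∈ Set.Icc (1/L) L,
      |b (lam * n) / b n - lam ^ α| < ε := by
  obtain ⟨hα0, hα1⟩ := hα
  have hL0 : 0 < L := by linarith
  -- choose δ with δ^α < ε/6
  set D : ℝ := (ε/7) ^ (1/α) with hD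
  have hDpos : 0 < D := Real.rpow_pos_of_pos (by linarith) _
  set δ : ℝ := min 1 D with hδdef
  have hδpos : 0 < δ := lt_min one_pos hDpos
  have hδα : δ ^ α < ε/6 := by
    have h1 : δ ^ α ≤ D ^ α :=
      Real.rpow_le_rpow hδpos.le (min_le_right _ _) hα0.le
    have h2 : D ^ α = ε/7 := by
      rw [hD, ← Real.rpow_mul (by linarith : (0:ℝ) ≤ ε/7), one_div,
        inv_mul_cancel₀ (ne_of_gt hα0), Real.rpow_one]
    rw [h2] at h1
    linarith
  set M : ℕ := ⌈(L - 1/L)/δ⌉₊ with hM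
  set g : ℕ → ℝ := fun j => 1/L + j * δ with hg
  have hgpos : ∀ j : ℕ, 0 < g j := by
    intro j
    have : (0:ℝ) ≤ (j:ℝ) * δ := by positivity
    have h1 : (0:ℝ) < 1/L := by positivity
    simp only [hg]
    linarith
  have hev : ∀ᶠ n : ℕ in atTop, ∀ j ∈ Finset.range (M+2),
      |b (g j * n) / b n - (g j) ^ α| < ε/6 := by
    rw [eventually_all_finset]
    intro j _
    have h := (hreg (g j) (hgpos j)).comp tendsto_natCast_atTop_atTop
    have := Metric.tendsto_nhds.mp h (ε/6) (by linarith)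
    simpa [Real.dist_eq] using this
  filter_upwards [hev] with n hn lam hlam
  obtain ⟨hlam1, hlam2⟩ := hlam
  have hlamL : 0 ≤ lam - 1/L := by linarith
  set i : ℕ := ⌊(lam - 1/L)/δ⌋₊ with hi
  have hi_le : (i:ℝ) ≤ (lam - 1/L)/δ := Nat.floor_le (by positivity)
  have hi_lt : (lam - 1/L)/δ < i + 1 := Nat.lt_floor_add_one _
  have h1 : g i ≤ lam := by
    have h' : (i:ℝ) * δ ≤ lam - 1/L := by
      calc (i:ℝ) * δ ≤ (lam - 1/L)/δ * δ :=
            mul_le_mul_of_nonneg_right hi_le hδpos.le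
        _ = lam - 1/L := div_mul_cancel₀ _ hδpos.ne'
    simp only [hg]; linarith
  have h2 : lam < g (i+1) := by
    have h' : lam - 1/L < ((i:ℝ) + 1) * δ := by
      calc lam - 1/L = (lam - 1/L)/δ * δ := (div_mul_cancel₀ _ hδpos.ne').symm
        _ < ((i:ℝ) + 1) * δ := mul_lt_mul_of_pos_right hi_lt hδpos
    simp only [hg]; push_cast; linarith
  have hiM : i ≤ M := by
    have hle : (i:ℝ) ≤ (M:ℝ) := by
      calc (i:ℝ) ≤ (lam - 1/L)/δ := hi_le
        _ ≤ (L - 1/L)/δ := (div_le_div_iff_of_pos_right hδpos).mpr (by linarith)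
        _ ≤ (M:ℝ) := Nat.le_ceil _
    exact_mod_cast hle
  have hA := hn i (Finset.mem_range.mpr (by omega))
  have hB := hn (i+1) (Finset.mem_range.mpr (by omega))
  have hbn : 0 < b n := hbpos _
  have m1 : b (g i * n) ≤ b (lam * n) :=
    hbmono (mul_le_mul_of_nonneg_right h1 n.cast_nonneg)
  have m2 : b (lam * n) ≤ b (g (i+1) * n) :=
    hbmono (mul_le_mul_of_nonneg_right h2.le n.cast_nonneg)
  have d1 : b (g i * n) / b n ≤ b (lam * n) / b n :=
    (div_le_div_iff_of_pos_right hbn).mpr m1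
  have d2 : b (lam * n) / b n ≤ b (g (i+1) * n) / b n :=
    (div_le_div_iff_of_pos_right hbn).mpr m2
  have hd1 : lam - g i ≤ δ := by
    simp only [hg] at h2 ⊢
    push_cast at h2
    linarith
  have hd2 : g (i+1) - lam ≤ δ := by
    simp only [hg] at h1 ⊢
    push_cast
    linarith
  have r1 : lam ^ α - (g i) ^ α ≤ δ ^ α := by
    calc lam ^ α - (g i) ^ α ≤ (lam - g i) ^ α :=
          aux_rpow_sub_le hα0.le hα1.le (hgpos i).le h1
      _ ≤ δ ^ α := Real.rpow_le_rpow (by linarith) hd1 hα0.le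
  have hlam0 : (0:ℝ) < lam := lt_of_lt_of_le (by positivity) hlam1
  have r2 : (g (i+1)) ^ α - lam ^ α ≤ δ ^ α := by
    calc (g (i+1)) ^ α - lam ^ α ≤ (g (i+1) - lam) ^ α :=
          aux_rpow_sub_le hα0.le hα1.le hlam0.le h2.le
      _ ≤ δ ^ α := Real.rpow_le_rpow (by linarith) hd2 hα0.le
  rw [abs_lt] at hA hB ⊢
  constructor
  · linarith [hA.1]
  · linarith [hB.2]

set_option maxHeartbeats 1600000 in
/-- `sup { |k/b_n - (a_k/n)^α| : k ∈ [b_{n/c}, b_{cn}) } → 0` as `n → ∞`. -/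
theorem k_over_bn_close_to_ak_over_n
    (α : ℝ) (hα : α ∈ Set.Ioo (0:ℝ) 1)
    (b : ℝ → ℝ) (hbpos : ∀ t, 0 < b t) (hbmono : Monotone b)
    (hreg : ∀ lam : ℝ, 0 < lam →
      Tendsto (fun t => b (lam * t) / b t) atTop (nhds (lam ^ α)))
    (hbtop : Tendsto b atTop atTop)
    (a : ℕ → ℕ) (ha : ∀ k, a k = sInf {n : ℕ | (k:ℝ) < b n})
    (c : ℝ) (hc : 1 < c) :
    ∀ ε : ℝ, 0 < ε → ∀ᶠ n : ℕ in atTop, ∀ k : ℕ,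
      b ((n:ℝ)/c) ≤ (k:ℝ) → (k:ℝ) < b (c * n) →
      |(k:ℝ)/b n - ((a k : ℝ)/(n:ℝ)) ^ α| < ε := by
  obtain ⟨hα0, hα1⟩ := hα
  intro ε hε
  have hc0 : (0:ℝ) < c := by linarith
  have hL : (1:ℝ) < 2*c := by linarith
  have hkey := aux_uniform α ⟨hα0, hα1⟩ b hbpos hbmono hreg (2*c) hL (ε/2) (by linarith)
  -- eventually (1/n)^α < ε/2
  set D : ℝ := (ε/2) ^ (1/α) with hD
  have hDpos : 0 < D := Real.rpow_pos_of_pos (by linarith) _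
  have hDα : D ^ α = ε/2 := by
    rw [hD, ← Real.rpow_mul (by linarith : (0:ℝ) ≤ ε/2), one_div,
      inv_mul_cancel₀ (ne_of_gt hα0), Real.rpow_one]
  have hsmall : ∀ᶠ n : ℕ in atTop, ((1:ℝ)/n) ^ α < ε/2 := by
    have hev : ∀ᶠ n : ℕ in atTop, (1/D : ℝ) < n :=
      tendsto_natCast_atTop_atTop.eventually_gt_atTop _
    filter_upwards [hev, eventually_gt_atTop 0] with n h1 h2
    have hn0 : (0:ℝ) < n := by exact_mod_cast h2
    have : (1:ℝ)/n < D := by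
      rw [div_lt_iff₀ hn0]
      calc (1:ℝ) = D * (1/D) := by field_simp
        _ < D * n := by
            exact mul_lt_mul_of_pos_left h1 hDpos
    calc ((1:ℝ)/n) ^ α < D ^ α := Real.rpow_lt_rpow (by positivity) this hα0
      _ = ε/2 := hDα
  have hbig : ∀ᶠ n : ℕ in atTop, 2*c ≤ (n:ℝ) :=
    tendsto_natCast_atTop_atTop.eventually_ge_atTop _
  filter_upwards [hkey, hsmall, hbig] with n hk hsm hn2c
  intro k hk1 hk2
  have hn0 : (0:ℝ) < n := lt_of_lt_of_le (by linarith) hn2c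
  have hbn : 0 < b n := hbpos _
  -- basic facts about a k
  have hS : {m : ℕ | (k:ℝ) < b m}.Nonempty := by
    have := (hbtop.comp tendsto_natCast_atTop_atTop).eventually_gt_atTop (k:ℝ)
    exact this.exists
  have hak_mem : (k:ℝ) < b (a k) := by
    have := Nat.sInf_mem hS
    rw [← ha k] at this
    exact this
  have hak_pos : 1 ≤ a k := by
    by_contra h
    push_neg at h
    have h0 : a k = 0 := by omega
    have hle0 : ((a k : ℕ):ℝ) ≤ (n:ℝ)/c := by
      rw [h0]; push_cast; positivity
    have := hbmono hle0
    linarith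
  have hprev : b ((a k : ℝ) - 1) ≤ (k:ℝ) := by
    have hlt : a k - 1 < sInf {m : ℕ | (k:ℝ) < b m} := by
      rw [← ha k]; omega
    have hnot := Nat.notMem_of_lt_sInf hlt
    simp only [Set.mem_setOf_eq, not_lt] at hnot
    have hcast : ((a k - 1 : ℕ) : ℝ) = (a k : ℝ) - 1 := by
      push_cast [hak_pos]; ring
    rwa [hcast] at hnot
  have hlow : (n:ℝ)/c < (a k : ℝ) := by
    by_contra h
    push_neg at h
    have : b (a k) ≤ b ((n:ℝ)/c) := hbmono h
    linarith
  have hupp : (a k : ℝ) ≤ c*n + 1 := by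
    have hmem : ⌈c*(n:ℝ)⌉₊ ∈ {m : ℕ | (k:ℝ) < b m} := by
      simp only [Set.mem_setOf_eq]
      exact lt_of_lt_of_le hk2 (hbmono (Nat.le_ceil _))
    have h1 : a k ≤ ⌈c*(n:ℝ)⌉₊ := by rw [ha k]; exact Nat.sInf_le hmem
    have h2 : (⌈c*(n:ℝ)⌉₊ : ℝ) < c*n + 1 := Nat.ceil_lt_add_one (by positivity)
    calc (a k : ℝ) ≤ (⌈c*(n:ℝ)⌉₊ : ℝ) := by exact_mod_cast h1
      _ ≤ c*n + 1 := h2.le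
  set lam := (a k : ℝ)/n with hlamdef
  set lam' := ((a k : ℝ) - 1)/n with hlamdef'
  have hinv : 1/(2*c) ≤ 1/c := by
    apply one_div_le_one_div_of_le hc0
    linarith
  have hn_inv : (1:ℝ)/n ≤ 1/(2*c) := by
    apply one_div_le_one_div_of_le (by linarith)
    exact hn2c
  have h2c_inv : 1/(2*c) ≤ c := by
    rw [div_le_iff₀ (by linarith : (0:ℝ) < 2*c)]
    nlinarith
  have hn_lt : (n:ℝ) < (a k : ℝ) * c := by
    rwa [div_lt_iff₀ hc0] at hlow
  have hak_nonneg : (0:ℝ) ≤ (a k : ℝ) := Nat.cast_nonneg _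
  have hlam_mem : lam ∈ Set.Icc (1/(2*c)) (2*c) := by
    constructor
    · rw [hlamdef, div_le_div_iff₀ (by linarith : (0:ℝ) < 2*c) hn0]
      nlinarith [mul_nonneg hak_nonneg hc0.le]
    · rw [hlamdef, div_le_iff₀ hn0]
      have h6 : c*(2*c) ≤ c*n := mul_le_mul_of_nonneg_left hn2c hc0.le
      have h7 : (1:ℝ) ≤ c*(2*c) := by nlinarith
      linarith [hupp]
  have hlam'_mem : lam' ∈ Set.Icc (1/(2*c)) (2*c) := by
    constructor
    · rw [hlamdef', le_div_iff₀ hn0]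
      have h5 : (1/c - 1/(2*c)) * (2*c) ≤ (1/c - 1/(2*c)) * n :=
        mul_le_mul_of_nonneg_left hn2c (by linarith [hinv])
      have e2 : (1/c - 1/(2*c)) * (2*c) = 1 := by field_simp; ring
      rw [e2] at h5
      have e3 : 1/c * n < (a k : ℝ) := by
        have e4 : 1/c * (n:ℝ) = (n:ℝ)/c := by ring
        rw [e4, div_lt_iff₀ hc0]
        exact hn_lt
      have e5 : (1/c - 1/(2*c)) * (n:ℝ) = 1/c * n - 1/(2*c) * n := by ring
      rw [e5] at h5
      linarith
    · rw [hlamdef', div_le_iff₀ hn0]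
      have h6 : c*(2*c) ≤ c*n := mul_le_mul_of_nonneg_left hn2c hc0.le
      have h7 : (1:ℝ) ≤ c*(2*c) := by nlinarith
      linarith [hupp]
  have hb1 := hk lam hlam_mem
  have hb2 := hk lam' hlam'_mem
  have e1 : lam * n = (a k : ℝ) := div_mul_cancel₀ _ hn0.ne'
  have e2 : lam' * n = (a k : ℝ) - 1 := div_mul_cancel₀ _ hn0.ne'
  rw [e1] at hb1
  rw [e2] at hb2
  -- sandwich
  have up : (k:ℝ)/b n < b (a k) / b n := (div_lt_div_iff_of_pos_right hbn).mpr hak_mem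
  have lo : b ((a k : ℝ) - 1) / b n ≤ (k:ℝ)/b n := (div_le_div_iff_of_pos_right hbn).mpr hprev
  have hlam'0 : (0:ℝ) ≤ lam' := le_trans (by positivity) hlam'_mem.1
  have hdiff : lam - lam' = 1/n := by
    rw [hlamdef, hlamdef']
    field_simp
    ring
  have hle : lam' ≤ lam := by
    rw [hlamdef, hlamdef']
    apply (div_le_div_iff_of_pos_right hn0).mpr
    linarith
  have hr : lam ^ α - lam' ^ α ≤ ((1:ℝ)/n) ^ α := by
    have h := aux_rpow_sub_le hα0.le hα1.le hlam'0 hle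
    rwa [hdiff] at h
  rw [abs_lt] at hb1 hb2 ⊢
  constructor
  · -- lam^α - k/bn < ε
    linarith [hb2.1, lo, hr, hsm]
  · linarith [hb1.2, up]
end

section
/- Let α ∈ (0,1), d ≥ 1, c > 1, and λ_1, …, λ_d ≥ 0. Then (1/α) ∫_{c^{-α}}^{c^{α}} ∫_{Δ_{d-1}} exp( −( ∑_{j=1}^{d-1} λ_j θ_j + λ_d (1 − ∑_{j=1}^{d-1} θ_j) ) r^{-1/α} ) dθ dr equals ∫_{{y ∈ [0,∞)^d : c^{-1} < ∑_j y_j < c}} exp(−∑_j λ_j y_j) (∑_j y_j)^{-(d+α)} dy. -/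
open MeasureTheory Filter Topology Matrix ContinuousLinearMap

/-- Jacobian matrix of the BPY change of variables. -/
def BPYJ (d : ℕ) (s q : ℝ) (θ : Fin d → ℝ) : Matrix (Fin (d+1)) (Fin (d+1)) ℝ :=
  Matrix.of fun j k =>
    Fin.lastCases
      (Fin.lastCases (q * (1 - ∑ i, θ i)) (fun _ => -s) k)
      (fun i => Fin.lastCases (q * θ i) (fun i' => if i' = i then s else 0) k) j

lemma BPYJ_det (d : ℕ) (s q : ℝ) (θ : Fin d → ℝ) :
    (BPYJ d s q θ).det = s ^ d * q := by
  classical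
  set J := BPYJ d s q θ with hJ
  set C : Matrix (Fin (d+1)) (Fin (d+1)) ℝ :=
    Matrix.of fun j k => if j = Fin.last d then 1 else if j = k then (1:ℝ) else 0 with hC
  have hCt : (Cᵀ).BlockTriangular id := by
    intro i j hij
    simp only [hC, Matrix.transpose_apply, Matrix.of_apply]
    have h1 : j ≠ Fin.last d := ((hij.trans_le (Fin.le_last i)).ne)
    have h2 : j ≠ i := ne_of_lt hij
    simp [h1, h2]
  have hCdet : C.det = 1 := by
    rw [← Matrix.det_transpose, Matrix.det_of_upperTriangular hCt]
    simp [hC]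
  set U : Matrix (Fin (d+1)) (Fin (d+1)) ℝ :=
    Matrix.of fun j k =>
      Fin.lastCases (Fin.lastCases q (fun _ => (0:ℝ)) k)
        (fun i => J (Fin.castSucc i) k) j with hU
  have hCJ : C * J = U := by
    ext j k
    rw [Matrix.mul_apply]
    induction j using Fin.lastCases with
    | last =>
      have : ∀ l, C (Fin.last d) l = 1 := by intro l; simp [hC]
      simp only [this, one_mul]
      rw [Fin.sum_univ_castSucc]
      induction k using Fin.lastCases with
      | last =>
        simp only [hJ, BPYJ, Matrix.of_apply, Fin.lastCases_last, Fin.lastCases_castSucc, hU]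
        rw [← Finset.mul_sum]
        ring
      | cast i =>
        simp [hJ, BPYJ, hU, Finset.sum_ite_eq]
    | cast i =>
      have : ∀ l, C (Fin.castSucc i) l = if Fin.castSucc i = l then 1 else 0 := by
        intro l; simp [hC, Fin.castSucc_lt_last i |>.ne]
      simp only [this, ite_mul, one_mul, zero_mul]
      rw [Finset.sum_ite_eq]
      simp [hU]
  have hUt : U.BlockTriangular id := by
    intro a b hab
    induction a using Fin.lastCases with
    | last =>
      induction b using Fin.lastCases with
      | last => exact absurd hab (lt_irrefl _)
      | cast i => simp [hU]
    | cast i =>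
      induction b using Fin.lastCases with
      | last => exact absurd (hab.trans_le (Fin.le_last _)) (lt_irrefl _)
      | cast i' =>
        have hne : i' ≠ i := by
          intro h; subst h; exact lt_irrefl _ hab
        simp [hU, hJ, BPYJ, hne]
  have hUdet : U.det = s ^ d * q := by
    rw [Matrix.det_of_upperTriangular hUt, Fin.prod_univ_castSucc]
    simp [hU, hJ, BPYJ]
  have := Matrix.det_mul C J
  rw [hCJ, hCdet, one_mul] at this
  rw [← this, hUdet]

/-- the BPY transformation. -/
noncomputable def BPYT (d : ℕ) (p : ℝ) (x : Fin (d+1) → ℝ) : Fin (d+1) → ℝ := fun j =>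
  Fin.lastCases ((x (Fin.last d)) ^ p * (1 - ∑ i, x (Fin.castSucc i)))
    (fun i => (x (Fin.last d)) ^ p * x (Fin.castSucc i)) j

noncomputable def BPYD (d : ℕ) (p : ℝ) (x : Fin (d+1) → ℝ) :
    (Fin (d+1) → ℝ) →L[ℝ] (Fin (d+1) → ℝ) :=
  (Matrix.toLin' (BPYJ d ((x (Fin.last d)) ^ p) (p * (x (Fin.last d)) ^ (p-1))
    (fun i => x (Fin.castSucc i)))).toContinuousLinearMap

lemma BPYD_apply (d : ℕ) (p : ℝ) (x v : Fin (d+1) → ℝ) (j : Fin (d+1)) :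
    BPYD d p x v j =
      Fin.lastCases
        ((p * (x (Fin.last d)) ^ (p-1)) * (1 - ∑ i, x (Fin.castSucc i)) * v (Fin.last d)
          - (x (Fin.last d)) ^ p * ∑ i, v (Fin.castSucc i))
        (fun i => (x (Fin.last d)) ^ p * v (Fin.castSucc i)
          + (p * (x (Fin.last d)) ^ (p-1)) * x (Fin.castSucc i) * v (Fin.last d)) j := by
  classical
  simp only [BPYD, LinearMap.coe_toContinuousLinearMap', Matrix.toLin'_apply, Matrix.mulVec,
    dotProduct]
  induction j using Fin.lastCases with
  | last =>
    simp only [Fin.lastCases_last, BPYJ, Matrix.of_apply]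
    rw [Fin.sum_univ_castSucc]
    simp only [Fin.lastCases_last, Fin.lastCases_castSucc]
    simp only [neg_mul, Finset.mul_sum, sub_eq_add_neg, ← Finset.sum_neg_distrib]
    ring
  | cast i =>
    simp only [Fin.lastCases_castSucc, BPYJ, Matrix.of_apply]
    rw [Fin.sum_univ_castSucc]
    simp only [Fin.lastCases_last, Fin.lastCases_castSucc, ite_mul, zero_mul]
    rw [Finset.sum_ite_eq' Finset.univ i]
    simp only [Finset.mem_univ, ite_true]
    try ring

lemma BPYT_hasFDerivAt (d : ℕ) (p : ℝ) (x : Fin (d+1) → ℝ) (hx : x (Fin.last d) ≠ 0) :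
    HasFDerivAt (BPYT d p) (BPYD d p x) x := by
  apply hasFDerivAt_pi''
  intro j
  have hr : HasFDerivAt (fun y : Fin (d+1) → ℝ => (y (Fin.last d)) ^ p)
      ((p * (x (Fin.last d)) ^ (p-1)) • proj (R := ℝ) (Fin.last d)) x := by
    exact (Real.hasDerivAt_rpow_const (p := p) (Or.inl hx)).comp_hasFDerivAt x
      (hasFDerivAt_apply (𝕜 := ℝ) (Fin.last d) x)
  induction j using Fin.lastCases with
  | last =>
    have hsum : HasFDerivAt (fun y : Fin (d+1) → ℝ => ∑ i, y (Fin.castSucc i))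
        (∑ i : Fin d, proj (R := ℝ) (φ := fun _ => ℝ) (Fin.castSucc i)) x :=
      HasFDerivAt.fun_sum (fun i _ => hasFDerivAt_apply (Fin.castSucc i) x)
    have h1 : HasFDerivAt (fun y : Fin (d+1) → ℝ => 1 - ∑ i, y (Fin.castSucc i))
        (-(∑ i : Fin d, proj (R := ℝ) (φ := fun _ => ℝ) (Fin.castSucc i))) x := hsum.const_sub 1
    have := hr.fun_mul h1
    convert! ((fun h => h) this) using 1
    · funext y
      simp [BPYT]
    · ext v
      rw [ContinuousLinearMap.comp_apply]
      simp only [ContinuousLinearMap.proj_apply]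
      rw [BPYD_apply]
      simp only [Fin.lastCases_last, ContinuousLinearMap.proj_apply,
        ContinuousLinearMap.add_apply, ContinuousLinearMap.smul_apply,
        ContinuousLinearMap.neg_apply, ContinuousLinearMap.sum_apply, smul_eq_mul]
      ring
  | cast i =>
    have h2 : HasFDerivAt (fun y : Fin (d+1) → ℝ => y (Fin.castSucc i))
        (proj (R := ℝ) (Fin.castSucc i)) x := hasFDerivAt_apply (Fin.castSucc i) x
    have := hr.fun_mul h2
    convert! ((fun h => h) this) using 1
    · funext y
      simp [BPYT]
    · ext v
      rw [ContinuousLinearMap.comp_apply]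
      simp only [ContinuousLinearMap.proj_apply]
      rw [BPYD_apply]
      simp only [Fin.lastCases_castSucc, ContinuousLinearMap.proj_apply,
        ContinuousLinearMap.add_apply, ContinuousLinearMap.smul_apply, smul_eq_mul]
      ring

lemma BPYD_det (d : ℕ) (p : ℝ) (x : Fin (d+1) → ℝ) :
    (BPYD d p x).det
      = ((x (Fin.last d)) ^ p) ^ d * (p * (x (Fin.last d)) ^ (p-1)) := by
  rw [ContinuousLinearMap.det, BPYD, LinearMap.coe_toContinuousLinearMap,
    LinearMap.det_toLin', BPYJ_det]

lemma BPYT_sum (d : ℕ) (p : ℝ) (x : Fin (d+1) → ℝ) :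
    ∑ j, BPYT d p x j = (x (Fin.last d)) ^ p := by
  rw [Fin.sum_univ_castSucc]
  simp only [BPYT, Fin.lastCases_castSucc, Fin.lastCases_last]
  rw [← Finset.mul_sum]
  ring

/-- change-of-variables identity between the `(r,θ)` integral over
`(c^{-α}, c^α) × Δ_d` and the `y`-integral over `{c⁻¹ < ∑ y_j < c}`; here the
dimension is `d + 1 ≥ 1`. -/
theorem BPY_integral_change_of_variables
    (d : ℕ) (α : ℝ) (hα : α ∈ Set.Ioo (0:ℝ) 1)
    (c : ℝ) (hc : 1 < c) (lam : Fin (d+1) → ℝ) (hlam : ∀ j, 0 ≤ lam j) :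
    (1/α) * ∫ r in Set.Ioo (c ^ (-α)) (c ^ α),
        (∫ θ in {θ : Fin d → ℝ | (∀ i, 0 ≤ θ i) ∧ ∑ i, θ i ≤ 1},
          Real.exp (-(∑ i : Fin d, lam i.castSucc * θ i
            + lam (Fin.last d) * (1 - ∑ i, θ i)) * r ^ (-(1/α))))
      = ∫ y in {y : Fin (d+1) → ℝ | (∀ i, 0 ≤ y i) ∧ c⁻¹ < ∑ i, y i ∧ ∑ i, y i < c},
          Real.exp (-∑ i, lam i * y i) * (∑ i, y i) ^ (-((d : ℝ) + 1 + α)) := by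
  classical
  obtain ⟨hα0, hα1⟩ := hα
  have hαne : α ≠ 0 := ne_of_gt hα0
  have hc0 : (0:ℝ) < c := lt_trans one_pos hc
  set p : ℝ := -(1/α) with hp
  have hp0 : p < 0 := by rw [hp]; simp; positivity
  have hpne : p ≠ 0 := ne_of_lt hp0
  set S : Set (Fin d → ℝ) := {θ : Fin d → ℝ | (∀ i, 0 ≤ θ i) ∧ ∑ i, θ i ≤ 1} with hS
  set R : Set ℝ := Set.Ioo (c ^ (-α)) (c ^ α) with hR
  set B : Set (Fin (d+1) → ℝ) :=
    {y : Fin (d+1) → ℝ | (∀ i, 0 ≤ y i) ∧ c⁻¹ < ∑ i, y i ∧ ∑ i, y i < c} with hB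
  set e : (Fin (d+1) → ℝ) ≃ᵐ ℝ × (Fin d → ℝ) :=
    MeasurableEquiv.piFinSuccAbove (fun _ => ℝ) (Fin.last d) with he
  set A : Set (Fin (d+1) → ℝ) := e ⁻¹' (R ×ˢ S) with hA
  have hcα_pos : (0:ℝ) < c ^ (-α) := Real.rpow_pos_of_pos hc0 _
  -- membership in A
  have he_apply : ∀ x : Fin (d+1) → ℝ, e x = (x (Fin.last d), fun i => x (Fin.castSucc i)) := by
    intro x
    rw [he, MeasurableEquiv.piFinSuccAbove_apply, Fin.insertNthEquiv_symm_apply]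
    refine Prod.ext rfl ?_
    funext j
    simp [Fin.removeNth, Fin.succAbove_last]
  have hmemA : ∀ x : Fin (d+1) → ℝ,
      x ∈ A ↔ (x (Fin.last d) ∈ R ∧ (fun i => x (Fin.castSucc i)) ∈ S) := by
    intro x
    rw [hA, Set.mem_preimage, he_apply]
    exact Set.mem_prod
  have hxlast_pos : ∀ x ∈ A, 0 < x (Fin.last d) := fun x hx =>
    lt_trans hcα_pos ((hmemA x).1 hx).1.1
  -- measurability
  have hmsum : ∀ n : ℕ, Measurable fun y : Fin n → ℝ => ∑ i, y i := fun n =>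
    Finset.measurable_sum _ fun i _ => measurable_pi_apply i
  have hSm : MeasurableSet S := by
    have : S = (⋂ i, {θ : Fin d → ℝ | 0 ≤ θ i}) ∩ {θ : Fin d → ℝ | ∑ i, θ i ≤ 1} := by
      ext θ; simp [hS, Set.mem_iInter, Set.mem_setOf_eq]
    rw [this]
    exact (MeasurableSet.iInter fun i =>
        measurableSet_le measurable_const (measurable_pi_apply i)).inter
      (measurableSet_le (hmsum d) measurable_const)
  have hRm : MeasurableSet R := measurableSet_Ioo
  have hAm : MeasurableSet A := e.measurable (hRm.prod hSm)
  -- derivative hypothesis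
  have hderiv : ∀ x ∈ A, HasFDerivWithinAt (BPYT d p) (BPYD d p x) A x := fun x hx =>
    (BPYT_hasFDerivAt d p x (hxlast_pos x hx).ne').hasFDerivWithinAt
  -- injectivity
  have hinj : Set.InjOn (BPYT d p) A := by
    intro x hx x' hx' hxy
    have hr0 : 0 < x (Fin.last d) := hxlast_pos x hx
    have hr0' : 0 < x' (Fin.last d) := hxlast_pos x' hx'
    have hsum : (x (Fin.last d)) ^ p = (x' (Fin.last d)) ^ p := by
      rw [← BPYT_sum d p x, ← BPYT_sum d p x', hxy]
    have hrr : x (Fin.last d) = x' (Fin.last d) := by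
      have e1 : x (Fin.last d) = ((x (Fin.last d)) ^ p) ^ p⁻¹ := by
        rw [← Real.rpow_mul hr0.le, mul_inv_cancel₀ hpne, Real.rpow_one]
      have e2 : x' (Fin.last d) = ((x' (Fin.last d)) ^ p) ^ p⁻¹ := by
        rw [← Real.rpow_mul hr0'.le, mul_inv_cancel₀ hpne, Real.rpow_one]
      rw [e1, e2, hsum]
    have hs0 : (x (Fin.last d)) ^ p ≠ 0 := (Real.rpow_pos_of_pos hr0 p).ne'
    funext j
    induction j using Fin.lastCases with
    | last => exact hrr
    | cast i =>
      have := congrFun hxy (Fin.castSucc i)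
      simp only [BPYT, Fin.lastCases_castSucc] at this
      rw [hrr] at this
      exact mul_left_cancel₀ (by rw [← hrr]; exact hs0) this
  -- rpow facts
  have hcap : (c ^ α) ^ p = c⁻¹ := by
    rw [← Real.rpow_mul hc0.le]
    have : α * p = -1 := by rw [hp]; field_simp
    rw [this, Real.rpow_neg_one]
  have hcmp : (c ^ (-α)) ^ p = c := by
    rw [← Real.rpow_mul hc0.le]
    have : -α * p = 1 := by rw [hp]; field_simp
    rw [this, Real.rpow_one]
  -- image
  have himg : BPYT d p '' A = B := by
    apply Set.Subset.antisymm
    · rintro _ ⟨x, hx, rfl⟩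
      obtain ⟨⟨hr1, hr2⟩, hθ0, hθ1⟩ := (hmemA x).1 hx
      have hr0 : 0 < x (Fin.last d) := hxlast_pos x hx
      have hs0 : 0 < (x (Fin.last d)) ^ p := Real.rpow_pos_of_pos hr0 p
      refine ⟨?_, ?_, ?_⟩
      · intro j
        induction j using Fin.lastCases with
        | last =>
          simp only [BPYT, Fin.lastCases_last]
          exact mul_nonneg hs0.le (by linarith [hθ1])
        | cast i =>
          simp only [BPYT, Fin.lastCases_castSucc]
          exact mul_nonneg hs0.le (hθ0 i)
      · rw [BPYT_sum, ← hcap]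
        exact Real.rpow_lt_rpow_of_neg hr0 hr2 hp0
      · rw [BPYT_sum, ← hcmp]
        exact Real.rpow_lt_rpow_of_neg hcα_pos hr1 hp0
    · intro y hy
      obtain ⟨hy0, hylb, hyub⟩ : (∀ i, 0 ≤ y i) ∧ c⁻¹ < ∑ i, y i ∧ ∑ i, y i < c := hy
      have hY0 : (0:ℝ) < ∑ i, y i := lt_trans (inv_pos.2 hc0) hylb
      set Y : ℝ := ∑ i, y i with hY
      refine ⟨fun j => Fin.lastCases (Y ^ (-α))
        (fun i => y (Fin.castSucc i) / Y) j, ?_, ?_⟩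
      · rw [hmemA]
        constructor
        · simp only [Fin.lastCases_last]
          have hmα : -α < 0 := by linarith
          constructor
          · exact Real.rpow_lt_rpow_of_neg hY0 hyub hmα
          · have h1 : Y ^ (-α) < (c⁻¹) ^ (-α) :=
              Real.rpow_lt_rpow_of_neg (inv_pos.2 hc0) hylb hmα
            have h2 : (c⁻¹ : ℝ) ^ (-α) = c ^ α := by
              rw [← Real.rpow_neg_one c, ← Real.rpow_mul hc0.le]
              norm_num
            rwa [h2] at h1
        · constructor
          · intro i
            simp only [Fin.lastCases_castSucc]
            exact div_nonneg (hy0 _) hY0.le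
          · simp only [Fin.lastCases_castSucc]
            rw [← Finset.sum_div, div_le_one hY0]
            have := Fin.sum_univ_castSucc (f := y)
            have h' : ∑ i : Fin d, y (Fin.castSucc i) = Y - y (Fin.last d) := by
              rw [hY, Fin.sum_univ_castSucc]; ring
            rw [h']
            linarith [hy0 (Fin.last d)]
      · -- BPYT maps this point to y
        have hsx : (Y ^ (-α)) ^ p = Y := by
          rw [← Real.rpow_mul hY0.le]
          have : -α * p = 1 := by rw [hp]; field_simp
          rw [this, Real.rpow_one]
        funext j
        induction j using Fin.lastCases with
        | last =>
          simp only [BPYT, Fin.lastCases_last, Fin.lastCases_castSucc]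
          rw [hsx, ← Finset.sum_div]
          have h' : ∑ i : Fin d, y (Fin.castSucc i) = Y - y (Fin.last d) := by
            rw [hY, Fin.sum_univ_castSucc]; ring
          rw [h']
          field_simp
          ring
        | cast i =>
          simp only [BPYT, Fin.lastCases_castSucc, Fin.lastCases_last]
          rw [hsx]
          field_simp
  -- the target integrand
  set G : (Fin (d+1) → ℝ) → ℝ :=
    fun y => Real.exp (-∑ i, lam i * y i) * (∑ i, y i) ^ (-((d : ℝ) + 1 + α)) with hG
  have key := integral_image_eq_integral_abs_det_fderiv_smul volume hAm hderiv hinj G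
  rw [himg] at key
  rw [key]
  -- pointwise identity on A
  have hpt : Set.EqOn
      (fun x : Fin (d+1) → ℝ => (1/α) * Real.exp
        (-(∑ i : Fin d, lam i.castSucc * x (Fin.castSucc i)
          + lam (Fin.last d) * (1 - ∑ i, x (Fin.castSucc i))) * (x (Fin.last d)) ^ p))
      (fun x => |(BPYD d p x).det| • G (BPYT d p x)) A := by
    intro x hx
    have hr0 : 0 < x (Fin.last d) := hxlast_pos x hx
    set r : ℝ := x (Fin.last d) with hr
    have hs0 : 0 < r ^ p := Real.rpow_pos_of_pos hr0 p
    have hr1 : 0 < r ^ (p - 1) := Real.rpow_pos_of_pos hr0 _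
    have hdet : |(BPYD d p x).det| = (r ^ p) ^ d * ((1/α) * r ^ (p - 1)) := by
      rw [BPYD_det, ← hr, abs_mul, abs_pow, abs_of_pos hs0]
      congr 1
      have hq : p * r ^ (p-1) = -((1/α) * r ^ (p-1)) := by rw [hp]; ring
      rw [hq, abs_neg, abs_of_pos (by positivity)]
    have hsum1 : ∑ i, BPYT d p x i = r ^ p := BPYT_sum d p x
    have hsum2 : ∑ i, lam i * BPYT d p x i
        = (∑ i : Fin d, lam i.castSucc * x (Fin.castSucc i)
            + lam (Fin.last d) * (1 - ∑ i, x (Fin.castSucc i))) * r ^ p := by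
      rw [Fin.sum_univ_castSucc]
      simp only [BPYT, Fin.lastCases_castSucc, Fin.lastCases_last]
      rw [add_mul, Finset.sum_mul]
      congr 1
      · exact Finset.sum_congr rfl fun i _ => by ring
      · ring
    have e1 : (r ^ p) ^ d = r ^ (p * (d:ℝ)) := by
      rw [← Real.rpow_natCast (r ^ p) d]
      exact (Real.rpow_mul hr0.le p (d:ℝ)).symm
    have e2 : (r ^ p) ^ (-((d:ℝ)+1+α)) = r ^ (p * (-((d:ℝ)+1+α))) :=
      (Real.rpow_mul hr0.le _ _).symm
    have hpow : ((r ^ p) ^ d) * r ^ (p-1) * (r ^ p) ^ (-((d:ℝ)+1+α)) = 1 := by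
      rw [e1, e2, ← Real.rpow_add hr0, ← Real.rpow_add hr0]
      have hz : p * (d:ℝ) + (p - 1) + p * (-((d:ℝ)+1+α)) = 0 := by
        rw [hp]; field_simp; ring
      rw [hz, Real.rpow_zero]
    show (1/α) * Real.exp
        (-(∑ i : Fin d, lam i.castSucc * x (Fin.castSucc i)
          + lam (Fin.last d) * (1 - ∑ i, x (Fin.castSucc i))) * r ^ p)
      = |(BPYD d p x).det| • G (BPYT d p x)
    simp only [smul_eq_mul, hG]
    rw [hdet, hsum1, hsum2, neg_mul]
    set L : ℝ := ∑ i : Fin d, lam i.castSucc * x (Fin.castSucc i)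
        + lam (Fin.last d) * (1 - ∑ i, x (Fin.castSucc i)) with hL
    linear_combination (-((1/α) * Real.exp (-(L * r ^ p)))) * hpow
  -- integrability over the product set
  set g2 : ℝ × (Fin d → ℝ) → ℝ := fun z => (1/α) * Real.exp
      (-(∑ i : Fin d, lam i.castSucc * z.2 i
        + lam (Fin.last d) * (1 - ∑ i, z.2 i)) * z.1 ^ p) with hg2
  have hRSm : MeasurableSet (R ×ˢ S) := hRm.prod hSm
  have hfin : ((volume : Measure ℝ).prod volume) (R ×ˢ S) < ⊤ := by
    rw [Measure.prod_prod]
    have h1 : (volume : Measure ℝ) R < ⊤ := by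
      rw [hR, Real.volume_Ioo]; exact ENNReal.ofReal_lt_top
    have h2 : (volume : Measure (Fin d → ℝ)) S < ⊤ := by
      have hsub : S ⊆ Set.pi Set.univ (fun _ : Fin d => Set.Icc (0:ℝ) 1) := by
        intro θ hθ i _
        exact ⟨hθ.1 i, le_trans (Finset.single_le_sum
          (f := θ) (fun i _ => hθ.1 i) (Finset.mem_univ i)) hθ.2⟩
      refine lt_of_le_of_lt (measure_mono hsub) ?_
      rw [volume_pi_pi]
      simp [Real.volume_Icc]
    exact ENNReal.mul_lt_top h1 h2
  have hcont : ContinuousOn g2 (R ×ˢ S) := by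
    intro z hz
    have hz1 : (0:ℝ) < z.1 := lt_trans hcα_pos hz.1.1
    have h1 : ContinuousAt (fun z : ℝ × (Fin d → ℝ) => z.1 ^ p) z :=
      (Real.continuousAt_rpow_const z.1 p (Or.inl hz1.ne')).comp continuousAt_fst
    have h2 : Continuous (fun z : ℝ × (Fin d → ℝ) =>
        -(∑ i : Fin d, lam i.castSucc * z.2 i
          + lam (Fin.last d) * (1 - ∑ i, z.2 i))) := by fun_prop
    exact (continuousAt_const.mul
      (Real.continuous_exp.continuousAt.comp (h2.continuousAt.mul h1))).continuousWithinAt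
  have hint : IntegrableOn g2 (R ×ˢ S) ((volume : Measure ℝ).prod volume) := by
    refine Integrable.mono' (g := fun _ => |1/α|)
      (integrableOn_const hfin.ne) (hcont.aestronglyMeasurable hRSm) ?_
    refine (ae_restrict_iff' hRSm).2 (ae_of_all _ fun z hz => ?_)
    have hL0 : 0 ≤ ∑ i : Fin d, lam i.castSucc * z.2 i
        + lam (Fin.last d) * (1 - ∑ i, z.2 i) := by
      have := hz.2.1
      have h2 := hz.2.2
      refine add_nonneg (Finset.sum_nonneg fun i _ => mul_nonneg (hlam _) (hz.2.1 i)) ?_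
      exact mul_nonneg (hlam _) (by linarith)
    have hzp : (0:ℝ) ≤ z.1 ^ p := Real.rpow_nonneg (lt_trans hcα_pos hz.1.1).le p
    have harg : -(∑ i : Fin d, lam i.castSucc * z.2 i
        + lam (Fin.last d) * (1 - ∑ i, z.2 i)) * z.1 ^ p ≤ 0 := by
      rw [neg_mul]
      exact neg_nonpos.2 (mul_nonneg hL0 hzp)
    have hexp : Real.exp (-(∑ i : Fin d, lam i.castSucc * z.2 i
        + lam (Fin.last d) * (1 - ∑ i, z.2 i)) * z.1 ^ p) ≤ 1 := by
      calc Real.exp _ ≤ Real.exp 0 := Real.exp_le_exp.2 harg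
      _ = 1 := Real.exp_zero
    have hexp0 : 0 < Real.exp (-(∑ i : Fin d, lam i.castSucc * z.2 i
        + lam (Fin.last d) * (1 - ∑ i, z.2 i)) * z.1 ^ p) := Real.exp_pos _
    rw [hg2]
    simp only [Real.norm_eq_abs, abs_mul]
    calc |1/α| * |Real.exp (-(∑ i : Fin d, lam i.castSucc * z.2 i
          + lam (Fin.last d) * (1 - ∑ i, z.2 i)) * z.1 ^ p)|
        = |1/α| * Real.exp (-(∑ i : Fin d, lam i.castSucc * z.2 i
          + lam (Fin.last d) * (1 - ∑ i, z.2 i)) * z.1 ^ p) := by rw [abs_of_pos hexp0]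
      _ ≤ |1/α| * 1 := by
          exact mul_le_mul_of_nonneg_left hexp (abs_nonneg _)
      _ = |1/α| := mul_one _
  -- assemble
  have hmp : MeasurePreserving e volume ((volume : Measure ℝ).prod volume) :=
    volume_preserving_piFinSuccAbove (fun _ : Fin (d+1) => ℝ) (Fin.last d)
  calc (1/α) * ∫ r in R, (∫ θ in S,
          Real.exp (-(∑ i : Fin d, lam i.castSucc * θ i
            + lam (Fin.last d) * (1 - ∑ i, θ i)) * r ^ p))
      = ∫ r in R, (1/α) * ∫ θ in S,
          Real.exp (-(∑ i : Fin d, lam i.castSucc * θ i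
            + lam (Fin.last d) * (1 - ∑ i, θ i)) * r ^ p) := (integral_const_mul _ _).symm
    _ = ∫ r in R, ∫ θ in S, g2 (r, θ) :=
        setIntegral_congr_fun hRm fun r _ => (integral_const_mul _ _).symm
    _ = ∫ z in R ×ˢ S, g2 z ∂((volume : Measure ℝ).prod volume) :=
        (setIntegral_prod g2 hint).symm
    _ = ∫ x in A, g2 (e x) := (hmp.setIntegral_preimage_emb e.measurableEmbedding g2 _).symm
    _ = ∫ x in A, (1/α) * Real.exp
          (-(∑ i : Fin d, lam i.castSucc * x (Fin.castSucc i)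
            + lam (Fin.last d) * (1 - ∑ i, x (Fin.castSucc i))) * (x (Fin.last d)) ^ p) :=
        setIntegral_congr_fun hAm fun x _ => by rw [he_apply x]
    _ = ∫ x in A, |(BPYD d p x).det| • G (BPYT d p x) :=
        setIntegral_congr_fun hAm hpt
end

section
/- Let f be the map f(x) = x(1−x)/(1−x−x²) on [0,1/2], f(x) = 1 − f(1−x) on (1/2,1], and let φ(x) = 1/(1−x) − 1/x for x ∈ (0,1). Then for all x ∈ (0,1) \ {1/2}, φ(f(x)) = φ(x) − 1/φ(x); that is, f is conjugated via φ to Boole's transformation T y = y − 1/y on ℝ \ {0}. -/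
open Filter Topology

/-- The branch `x(1-x)/(1-x-x²)` of Thaler's version of Boole's transformation. -/
noncomputable def f0 (x : ℝ) : ℝ := x * (1 - x) / (1 - x - x ^ 2)

/-- The interval map `f(x) = x(1-x)/(1-x-x²)` on `[0,1/2]`, `f(x) = 1 - f(1-x)` on `(1/2,1]`. -/
noncomputable def fB (x : ℝ) : ℝ := if x ≤ 1/2 then f0 x else 1 - f0 (1 - x)

lemma key (φ : ℝ → ℝ) (hφ : ∀ x, φ x = 1/(1-x) - 1/x) (x : ℝ)
    (hx0 : 0 < x) (hx : x < 1/2) : φ (f0 x) = φ x - 1/(φ x) := by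
  have hD : (0:ℝ) < 1 - x - x ^ 2 := by nlinarith
  have hD' : (1:ℝ) - x - x ^ 2 ≠ 0 := ne_of_gt hD
  have hx1 : x < 1 := by linarith
  have hxne : x ≠ 0 := ne_of_gt hx0
  have h1x : (1:ℝ) - x ≠ 0 := by intro h; nlinarith
  have hf : f0 x = x * (1 - x) / (1 - x - x ^ 2) := rfl
  have hfpos : 0 < f0 x := by
    rw [hf]; exact div_pos (by nlinarith) hD
  have h1mf : 1 - f0 x = (1 - 2*x) / (1 - x - x ^ 2) := by
    rw [hf]; field_simp; ring
  have h1mf' : (1:ℝ) - f0 x ≠ 0 := by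
    rw [h1mf]
    have : (0:ℝ) < 1 - 2*x := by linarith
    positivity
  have hφx : φ x = (2*x - 1) / (x * (1 - x)) := by
    rw [hφ]; field_simp; ring
  have hφne : φ x ≠ 0 := by
    rw [hφx]
    have h1 : 2*x - 1 ≠ 0 := by intro h; nlinarith
    have h2 : x * (1 - x) ≠ 0 := mul_ne_zero hxne h1x
    exact div_ne_zero h1 h2
  have h12 : (1:ℝ) - 2*x ≠ 0 := by intro h; nlinarith
  have h21 : 2*x - 1 ≠ 0 := by intro h; nlinarith
  rw [hφ (f0 x), h1mf, hφx, hf]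
  rw [one_div_div, one_div_div, one_div_div]
  rw [div_sub_div _ _ h12 (mul_ne_zero hxne h1x), div_sub_div _ _ (mul_ne_zero hxne h1x) h21,
    div_eq_div_iff (mul_ne_zero h12 (mul_ne_zero hxne h1x)) (mul_ne_zero (mul_ne_zero hxne h1x) h21)]
  ring

lemma phi_neg (φ : ℝ → ℝ) (hφ : ∀ x, φ x = 1/(1-x) - 1/x) (x : ℝ) :
    φ (1 - x) = -φ x := by
  rw [hφ, hφ]; ring_nf

/-- `f` is conjugated via `φ(x) = 1/(1-x) - 1/x` to Boole's
transformation `T y = y - 1/y` on `(0,1) \ {1/2}`. -/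
theorem boole_conjugacy (φ : ℝ → ℝ) (hφ : ∀ x, φ x = 1/(1-x) - 1/x) :
    ∀ x ∈ Set.Ioo (0:ℝ) 1, x ≠ 1/2 → φ (fB x) = φ x - 1/(φ x) := by
  rintro x ⟨hx0, hx1⟩ hne
  unfold fB
  by_cases h : x ≤ 1/2
  · have hx : x < 1/2 := lt_of_le_of_ne h hne
    simp only [if_pos h]
    exact key φ hφ x hx0 hx
  · simp only [if_neg h]
    push_neg at h
    have hy0 : 0 < 1 - x := by linarith
    have hy : 1 - x < 1/2 := by linarith
    have h1 : φ (1 - f0 (1 - x)) = -φ (f0 (1 - x)) := phi_neg φ hφ _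
    have h2 : φ (f0 (1 - x)) = φ (1 - x) - 1/(φ (1 - x)) := key φ hφ _ hy0 hy
    have h3 : φ (1 - x) = -φ x := phi_neg φ hφ x
    rw [h1, h2, h3]
    rw [one_div, one_div, inv_neg]
    ring
end

section
/- The measure μ(dx) = (1/x² + 1/(1−x)²) dx on [0,1] is invariant for the interval map f given by f(x) = x(1−x)/(1−x−x²) on [0,1/2] and f(x) = 1 − f(1−x) on (1/2,1]: for every Borel set A ⊆ [0,1], μ(f^{-1}(A)) = μ(A). Moreover μ([0,1]) = ∞, while μ([γ, f(γ)]) < ∞ for γ = √2 − 1. -/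
open MeasureTheory Filter Topology

/-! ### Auxiliary definitions: the conjugacy `ψ`, Boole's map `T`, and its inverse branches -/

noncomputable def psiB (x : ℝ) : ℝ := 1/(1-x) - 1/x
noncomputable def TBo (y : ℝ) : ℝ := y - 1/y
noncomputable def gp (y : ℝ) : ℝ := (y + Real.sqrt (y^2+4))/2
noncomputable def gm (y : ℝ) : ℝ := (y - Real.sqrt (y^2+4))/2

lemma sqrt4_abs (y : ℝ) : |y| < Real.sqrt (y^2+4) := by
  have : Real.sqrt (y^2) < Real.sqrt (y^2+4) := Real.sqrt_lt_sqrt (sq_nonneg y) (by linarith)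
  simpa [Real.sqrt_sq_eq_abs] using this

lemma sqrt4_sq (y : ℝ) : (Real.sqrt (y^2+4))^2 = y^2+4 := Real.sq_sqrt (by positivity)

lemma sqrt4_pos (y : ℝ) : 0 < Real.sqrt (y^2+4) := lt_of_le_of_lt (abs_nonneg y) (sqrt4_abs y)

lemma gp_pos (y : ℝ) : 0 < gp y := by
  have h := sqrt4_abs y
  have := neg_abs_le y
  unfold gp; nlinarith [abs_nonneg y]

lemma gm_neg (y : ℝ) : gm y < 0 := by
  have h := sqrt4_abs y
  have := le_abs_self y
  unfold gm; nlinarith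

lemma TBo_gp (y : ℝ) : TBo (gp y) = y := by
  have h0 : gp y ≠ 0 := ne_of_gt (gp_pos y)
  have hq : gp y ^ 2 - y * gp y - 1 = 0 := by
    unfold gp; nlinarith [sqrt4_sq y]
  unfold TBo
  field_simp
  nlinarith

lemma TBo_gm (y : ℝ) : TBo (gm y) = y := by
  have h0 : gm y ≠ 0 := ne_of_lt (gm_neg y)
  have hq : gm y ^ 2 - y * gm y - 1 = 0 := by
    unfold gm; nlinarith [sqrt4_sq y]
  unfold TBo
  field_simp
  nlinarith

lemma gp_TBo {x : ℝ} (hx : 0 < x) : gp (TBo x) = x := by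
  have hx' : x ≠ 0 := ne_of_gt hx
  have key : Real.sqrt ((TBo x)^2 + 4) = 2*x - TBo x := by
    have h1 : (TBo x)^2 + 4 = (2*x - TBo x)^2 := by
      unfold TBo; field_simp; ring
    rw [h1]
    apply Real.sqrt_sq
    have : 0 < 2*x - TBo x := by
      unfold TBo
      have : 0 < 1/x := by positivity
      linarith
    linarith
  unfold gp; rw [key]; ring

lemma gm_TBo {x : ℝ} (hx : x < 0) : gm (TBo x) = x := by
  have hx' : x ≠ 0 := ne_of_lt hx
  have key : Real.sqrt ((TBo x)^2 + 4) = TBo x - 2*x := by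
    have h1 : (TBo x)^2 + 4 = (TBo x - 2*x)^2 := by
      unfold TBo; field_simp; ring
    rw [h1]
    apply Real.sqrt_sq
    have : 0 < TBo x - 2*x := by
      unfold TBo
      have : 1/x < 0 := div_neg_of_pos_of_neg one_pos hx
      linarith
    linarith
  unfold gm; rw [key]; ring

lemma hasDerivAt_gp (y : ℝ) :
    HasDerivAt gp ((1 + y / Real.sqrt (y^2+4))/2) y := by
  have hs : 0 < y^2 + 4 := by positivity
  have h1 : HasDerivAt (fun y : ℝ => y^2+4) (2*y) y := by
    simpa using ((hasDerivAt_pow 2 y).add_const 4)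
  have h2 : HasDerivAt (fun y : ℝ => Real.sqrt (y^2+4)) (2*y / (2 * Real.sqrt (y^2+4))) y :=
    (Real.hasDerivAt_sqrt (ne_of_gt hs)).comp y h1 |>.congr_deriv (by ring)
  have h3 : HasDerivAt gp ((1 + 2*y / (2 * Real.sqrt (y^2+4)))/2) y := ((hasDerivAt_id y).add h2).div_const 2
  convert h3 using 1
  have := ne_of_gt (sqrt4_pos y)
  rw [mul_div_mul_left _ _ (two_ne_zero' ℝ)]

lemma gp'_pos (y : ℝ) : 0 < (1 + y / Real.sqrt (y^2+4))/2 := by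
  have h := sqrt4_abs y
  have hs := sqrt4_pos y
  have : -1 < y / Real.sqrt (y^2+4) := by
    rw [lt_div_iff₀ hs]
    have := neg_abs_le y
    linarith
  linarith

/-- One-dimensional change of variables for `volume` of an image set. -/
lemma volume_image_eq_lintegral {s : Set ℝ} {f f' : ℝ → ℝ} (hs : MeasurableSet s)
    (hf' : ∀ x ∈ s, HasDerivWithinAt f (f' x) s x) (hf : Set.InjOn f s) :
    volume (f '' s) = ∫⁻ x in s, ENNReal.ofReal |f' x| := by
  rw [← lintegral_abs_det_fderiv_eq_addHaar_image volume hs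
    (fun x hx => (hf' x hx).hasFDerivWithinAt) hf]
  simp

lemma hasDerivAt_gm (y : ℝ) :
    HasDerivAt gm ((1 - y / Real.sqrt (y^2+4))/2) y := by
  have h : HasDerivAt (fun y : ℝ => y - gp y) (1 - (1 + y / Real.sqrt (y^2+4))/2) y :=
    (hasDerivAt_id y).sub (hasDerivAt_gp y)
  have he : (fun y : ℝ => y - gp y) = gm := by
    funext z; unfold gp gm; ring
  rw [he] at h
  convert h using 1; ring

lemma gm'_pos (y : ℝ) : 0 < (1 - y / Real.sqrt (y^2+4))/2 := by
  have h := sqrt4_abs y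
  have hs := sqrt4_pos y
  have : y / Real.sqrt (y^2+4) < 1 := by
    rw [div_lt_one hs]
    exact lt_of_le_of_lt (le_abs_self y) h
  linarith

lemma gp_injOn (B : Set ℝ) : Set.InjOn gp B :=
  (StrictMono.injective (strictMono_of_deriv_pos (fun y => by
    rw [(hasDerivAt_gp y).deriv]; exact gp'_pos y))).injOn

lemma gm_injOn (B : Set ℝ) : Set.InjOn gm B :=
  (StrictMono.injective (strictMono_of_deriv_pos (fun y => by
    rw [(hasDerivAt_gm y).deriv]; exact gm'_pos y))).injOn

lemma boole_inv {B : Set ℝ} (hB : MeasurableSet B) :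
    volume (gp '' B) + volume (gm '' B) = volume B := by
  rw [volume_image_eq_lintegral hB
      (fun x _ => (hasDerivAt_gp x).hasDerivWithinAt) (gp_injOn B),
    volume_image_eq_lintegral hB
      (fun x _ => (hasDerivAt_gm x).hasDerivWithinAt) (gm_injOn B)]
  have hc : Continuous fun y : ℝ => (1 + y / Real.sqrt (y^2+4))/2 :=
    ((continuous_const.add (continuous_id.div
      (Real.continuous_sqrt.comp (by continuity))
      (fun y => ne_of_gt (sqrt4_pos y)))).div_const 2)
  have hmeas : Measurable fun y : ℝ => ENNReal.ofReal |(1 + y / Real.sqrt (y^2+4))/2| :=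
    ENNReal.measurable_ofReal.comp hc.measurable.abs
  rw [← lintegral_add_left hmeas]
  have : ∀ y : ℝ, ENNReal.ofReal |(1 + y / Real.sqrt (y^2+4))/2|
      + ENNReal.ofReal |(1 - y / Real.sqrt (y^2+4))/2| = 1 := by
    intro y
    rw [abs_of_pos (gp'_pos y), abs_of_pos (gm'_pos y),
      ← ENNReal.ofReal_add (le_of_lt (gp'_pos y)) (le_of_lt (gm'_pos y)),
      show (1 + y / Real.sqrt (y^2+4))/2 + (1 - y / Real.sqrt (y^2+4))/2 = 1 by ring,
      ENNReal.ofReal_one]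
  simp only [this]
  simp

lemma continuous_gm : Continuous gm :=
  (continuous_id.sub (Real.continuous_sqrt.comp (by continuity))).div_const 2

lemma preimage_TBo_decomp (B : Set ℝ) :
    {x : ℝ | x ≠ 0 ∧ TBo x ∈ B} = gp '' B ∪ gm '' B := by
  ext x
  constructor
  · rintro ⟨hx0, hxB⟩
    rcases lt_or_gt_of_ne hx0 with h | h
    · exact Or.inr ⟨TBo x, hxB, gm_TBo h⟩
    · exact Or.inl ⟨TBo x, hxB, gp_TBo h⟩
  · rintro (⟨y, hy, rfl⟩ | ⟨y, hy, rfl⟩)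
    · exact ⟨ne_of_gt (gp_pos y), by rwa [TBo_gp]⟩
    · exact ⟨ne_of_lt (gm_neg y), by rwa [TBo_gm]⟩

lemma volume_preimage_TBo {B : Set ℝ} (hB : MeasurableSet B) :
    volume {x : ℝ | x ≠ 0 ∧ TBo x ∈ B} = volume B := by
  rw [preimage_TBo_decomp B, measure_union _
    (hB.image_of_continuousOn_injOn continuous_gm.continuousOn (gm_injOn B))]
  · exact boole_inv hB
  · apply Set.disjoint_left.mpr
    rintro x ⟨y, _, rfl⟩ ⟨z, _, hz⟩
    exact absurd (hz ▸ gm_neg z) (not_lt.mpr (le_of_lt (gp_pos y)))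

/-! ### Properties of `ψ` -/

lemma psiB_hasDerivAt {x : ℝ} (hx : x ∈ Set.Ioo (0:ℝ) 1) :
    HasDerivAt psiB (1/x^2 + 1/(1-x)^2) x := by
  obtain ⟨h0, h1⟩ := hx
  have hx0 : x ≠ 0 := ne_of_gt h0
  have hx1 : (1:ℝ) - x ≠ 0 := by intro h; apply absurd h1; linarith [h]
  have ha : HasDerivAt (fun y : ℝ => 1 - y) (-1) x := by
    simpa using (hasDerivAt_id x).const_sub (1:ℝ)
  have hb : HasDerivAt (fun y : ℝ => (1 - y)⁻¹) (-(-1) / (1-x)^2) x := ha.inv hx1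
  have hc : HasDerivAt (fun y : ℝ => (y:ℝ)⁻¹) (-1 / x^2) x := by
    exact (hasDerivAt_id x).inv hx0
  have h : HasDerivAt (fun y : ℝ => (1 - y)⁻¹ - y⁻¹) _ x := hb.sub hc
  have he : (fun y : ℝ => (1 - y)⁻¹ - y⁻¹) = psiB := by
    funext z; unfold psiB; rw [one_div, one_div]
  rw [he] at h
  convert h using 1
  field_simp
  ring

lemma psiB_deriv_pos {x : ℝ} (hx : x ∈ Set.Ioo (0:ℝ) 1) : 0 < 1/x^2 + 1/(1-x)^2 := by
  obtain ⟨h0, h1⟩ := hx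
  have : 0 < x^2 := by positivity
  have h2 : 0 < (1-x)^2 := by nlinarith
  positivity

lemma psiB_strictMonoOn : StrictMonoOn psiB (Set.Ioo (0:ℝ) 1) := by
  apply strictMonoOn_of_deriv_pos (convex_Ioo _ _)
  · exact fun x hx => (psiB_hasDerivAt hx).continuousAt.continuousWithinAt
  · intro x hx
    rw [interior_Ioo] at hx
    rw [(psiB_hasDerivAt hx).deriv]
    exact psiB_deriv_pos hx

lemma psiB_injOn : Set.InjOn psiB (Set.Ioo (0:ℝ) 1) := psiB_strictMonoOn.injOn

lemma psiB_half : psiB (1/2) = 0 := by norm_num [psiB]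

lemma psiB_surj (y : ℝ) : ∃ x ∈ Set.Ioo (0:ℝ) 1, psiB x = y := by
  refine ⟨gp y / (1 + gp y), ⟨?_, ?_⟩, ?_⟩
  · have := gp_pos y; positivity
  · have h := gp_pos y
    rw [div_lt_one (by linarith)]; linarith
  · have h := gp_pos y
    have h1 : (1:ℝ) + gp y ≠ 0 := by linarith
    have h2 : gp y ≠ 0 := ne_of_gt h
    have : psiB (gp y / (1 + gp y)) = TBo (gp y) := by
      unfold psiB TBo
      field_simp
      ring
    rw [this, TBo_gp]

/-! ### The conjugacy `ψ ∘ fB = T ∘ ψ` -/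

lemma f0_mem {x : ℝ} (h0 : 0 < x) (h2 : x < 1/2) : f0 x ∈ Set.Ioo (0:ℝ) 1 := by
  have hD : 0 < 1 - x - x^2 := by nlinarith
  constructor
  · exact div_pos (by nlinarith) hD
  · unfold f0
    rw [div_lt_one hD]
    nlinarith

lemma psiB_f0 {x : ℝ} (h0 : 0 < x) (h2 : x < 1/2) : psiB (f0 x) = TBo (psiB x) := by
  have hD : 0 < 1 - x - x^2 := by nlinarith
  have hD' : (1:ℝ) - x - x^2 ≠ 0 := ne_of_gt hD
  have hx0 : x ≠ 0 := ne_of_gt h0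
  have hx1 : (1:ℝ) - x ≠ 0 := by nlinarith
  obtain ⟨hf0, hf1⟩ := f0_mem h0 h2
  have hf0' : f0 x ≠ 0 := ne_of_gt hf0
  have hf1' : (1:ℝ) - f0 x ≠ 0 := by nlinarith
  have ha : 1/(1-x) < 2 := by rw [div_lt_iff₀ (by nlinarith)]; nlinarith
  have hb : (2:ℝ) < 1/x := by rw [lt_div_iff₀ h0]; nlinarith
  have hpsi : psiB x ≠ 0 := ne_of_lt (by unfold psiB; linarith)
  have k1 : 1 - x - x^2 - x*(1-x) ≠ 0 := by nlinarith
  have k2 : x - (1 - x) ≠ 0 := by nlinarith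
  unfold psiB at hpsi
  unfold psiB TBo f0
  field_simp
  ring

lemma psiB_one_sub (x : ℝ) : psiB (1 - x) = - psiB x := by
  unfold psiB; ring_nf

lemma TBo_neg (y : ℝ) : TBo (-y) = - TBo y := by
  unfold TBo; ring_nf

lemma fB_mem {x : ℝ} (hx : x ∈ Set.Ioo (0:ℝ) 1) (hne : x ≠ 1/2) :
    fB x ∈ Set.Ioo (0:ℝ) 1 := by
  obtain ⟨h0, h1⟩ := hx
  unfold fB
  split_ifs with h
  · exact f0_mem h0 (lt_of_le_of_ne h hne)
  · have := f0_mem (x := 1 - x) (by linarith) (by push_neg at h; linarith)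
    obtain ⟨a, b⟩ := this
    exact ⟨by linarith, by linarith⟩

lemma psiB_fB {x : ℝ} (hx : x ∈ Set.Ioo (0:ℝ) 1) (hne : x ≠ 1/2) :
    psiB (fB x) = TBo (psiB x) := by
  obtain ⟨h0, h1⟩ := hx
  unfold fB
  split_ifs with h
  · exact psiB_f0 h0 (lt_of_le_of_ne h hne)
  · push_neg at h
    have key := psiB_f0 (x := 1 - x) (by linarith) (by linarith)
    rw [show (1:ℝ) - f0 (1-x) = 1 - f0 (1 - x) from rfl, psiB_one_sub, key,
      psiB_one_sub, TBo_neg]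
    ring

/-! ### The measure `μ` as an image of Lebesgue measure under `ψ⁻¹` -/

lemma mu_eq_volume_image {S : Set ℝ} (hS : MeasurableSet S) (hsub : S ⊆ Set.Ioo 0 1) :
    ((volume.restrict (Set.Icc (0:ℝ) 1)).withDensity
      (fun x => ENNReal.ofReal (1/x^2 + 1/(1-x)^2))) S = volume (psiB '' S) := by
  rw [withDensity_apply _ hS, Measure.restrict_restrict hS,
    Set.inter_eq_self_of_subset_left (hsub.trans Set.Ioo_subset_Icc_self),
    volume_image_eq_lintegral hS
      (fun x hx => (psiB_hasDerivAt (hsub hx)).hasDerivWithinAt) (psiB_injOn.mono hsub)]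
  refine setLIntegral_congr_fun hS (fun x hx => ?_)
  rw [abs_of_pos (psiB_deriv_pos (hsub hx))]

lemma measurable_fB : Measurable fB := by
  unfold fB f0
  apply Measurable.ite (measurableSet_le measurable_id measurable_const)
  · exact (measurable_id.mul (measurable_const.sub measurable_id)).div
      ((measurable_const.sub measurable_id).sub (measurable_id.pow_const 2))
  · exact measurable_const.sub
      (((measurable_const.sub measurable_id).mul
        (measurable_const.sub (measurable_const.sub measurable_id))).div
        ((measurable_const.sub (measurable_const.sub measurable_id)).sub
          ((measurable_const.sub measurable_id).pow_const 2)))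

/-- the measure `μ(dx) = (x⁻² + (1-x)⁻²) dx` on `[0,1]` is
`f`-invariant; it is infinite on `[0,1]` but finite on `[γ, f(γ)]` with `γ = √2 - 1`. -/
theorem boole_invariant_measure
    (μ : Measure ℝ)
    (hμ : μ = (volume.restrict (Set.Icc (0:ℝ) 1)).withDensity
      (fun x => ENNReal.ofReal (1/x^2 + 1/(1-x)^2))) :
    (∀ A : Set ℝ, MeasurableSet A → A ⊆ Set.Icc 0 1 → μ (fB ⁻¹' A) = μ A) ∧
    μ (Set.Icc (0:ℝ) 1) = ⊤ ∧
    μ (Set.Icc (Real.sqrt 2 - 1) (2 - Real.sqrt 2)) < ⊤ := by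
  have mu_null : ∀ t : Set ℝ, volume (t ∩ Set.Icc (0:ℝ) 1) = 0 → μ t = 0 := by
    intro t ht
    rw [hμ]
    refine withDensity_absolutelyContinuous _ _ ?_
    rw [Measure.restrict_apply' measurableSet_Icc]
    exact ht
  refine ⟨?_, ?_, ?_⟩
  · -- invariance
    intro A hA hsub
    set A' := A ∩ Set.Ioo 0 1 with hA'def
    have hA'm : MeasurableSet A' := hA.inter measurableSet_Ioo
    have hA'sub : A' ⊆ Set.Ioo 0 1 := Set.inter_subset_right
    set S := fB ⁻¹' A' ∩ (Set.Ioo 0 1 \ {(1:ℝ)/2}) with hSdef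
    have hSm : MeasurableSet S :=
      (measurable_fB hA'm).inter (measurableSet_Ioo.diff (measurableSet_singleton _))
    have hSsub : S ⊆ Set.Ioo 0 1 := fun x hx => hx.2.1
    -- μ A = μ A'
    have null01 : μ ({0, 1} : Set ℝ) = 0 := by
      apply mu_null
      refine measure_mono_null Set.inter_subset_left ?_
      exact measure_union_null Real.volume_singleton Real.volume_singleton
    have hAA' : μ A = μ A' := by
      refine le_antisymm ?_ (measure_mono Set.inter_subset_left)
      calc μ A ≤ μ (A' ∪ ({0, 1} : Set ℝ)) := by
            apply measure_mono
            intro x hx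
            rcases eq_or_ne x 0 with h | h0
            · exact Or.inr (Or.inl h)
            rcases eq_or_ne x 1 with h | h1
            · exact Or.inr (Or.inr h)
            · have hxI := hsub hx
              exact Or.inl ⟨hx, lt_of_le_of_ne hxI.1 (Ne.symm h0),
                lt_of_le_of_ne hxI.2 h1⟩
        _ ≤ μ A' + μ ({0, 1} : Set ℝ) := measure_union_le _ _
        _ = μ A' := by rw [null01, add_zero]
    -- μ (fB ⁻¹' A) = μ S
    have nullZ : μ ({(1:ℝ)/2} ∪ (Set.Ioo (0:ℝ) 1)ᶜ) = 0 := by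
      apply mu_null
      refine measure_mono_null ?_
        (show volume ({(1:ℝ)/2} ∪ ({0, 1} : Set ℝ)) = 0 from
          measure_union_null Real.volume_singleton
            (measure_union_null Real.volume_singleton Real.volume_singleton))
      rintro x ⟨hx, hx0, hx1⟩
      rcases hx with h | h
      · exact Or.inl h
      · rcases lt_or_ge 0 x with h0 | h0
        · rcases lt_or_ge x 1 with h1 | h1
          · exact absurd ⟨h0, h1⟩ h
          · exact Or.inr (Or.inr (le_antisymm hx1 h1))
        · exact Or.inr (Or.inl (le_antisymm h0 hx0))
    have hpre : μ (fB ⁻¹' A) = μ S := by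
      refine le_antisymm ?_ (measure_mono ?_)
      · calc μ (fB ⁻¹' A) ≤ μ (S ∪ ({(1:ℝ)/2} ∪ (Set.Ioo (0:ℝ) 1)ᶜ)) := by
              apply measure_mono
              intro x hx
              by_cases hxI : x ∈ Set.Ioo (0:ℝ) 1
              · by_cases hxh : x = 1/2
                · exact Or.inr (Or.inl hxh)
                · exact Or.inl ⟨⟨hx, fB_mem hxI hxh⟩, hxI, hxh⟩
              · exact Or.inr (Or.inr hxI)
          _ ≤ μ S + μ ({(1:ℝ)/2} ∪ (Set.Ioo (0:ℝ) 1)ᶜ) := measure_union_le _ _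
          _ = μ S := by rw [nullZ, add_zero]
      · exact fun x hx => hx.1.1
    -- pass to images under ψ
    set B := psiB '' A' with hBdef
    have hpsiCont : ContinuousOn psiB (Set.Ioo (0:ℝ) 1) :=
      fun x hx => (psiB_hasDerivAt hx).continuousAt.continuousWithinAt
    have hBm : MeasurableSet B :=
      hA'm.image_of_continuousOn_injOn (hpsiCont.mono hA'sub) (psiB_injOn.mono hA'sub)
    have him : psiB '' S = {y : ℝ | y ≠ 0 ∧ TBo y ∈ B} := by
      ext y
      constructor
      · rintro ⟨x, ⟨hxA', hxI, hxh⟩, rfl⟩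
        have hxh' : x ≠ 1/2 := hxh
        have hne : psiB x ≠ 0 := by
          intro h
          exact hxh' (psiB_injOn hxI (by norm_num) (by rw [h, psiB_half]))
        refine ⟨hne, ?_⟩
        rw [← psiB_fB hxI hxh']
        exact ⟨fB x, hxA', rfl⟩
      · rintro ⟨hy0, hyB⟩
        obtain ⟨x, hxI, rfl⟩ := psiB_surj y
        have hxh : x ≠ 1/2 := by
          intro h
          exact hy0 (by rw [h, psiB_half])
        obtain ⟨a, haA', ha⟩ := hyB
        rw [← psiB_fB hxI hxh] at ha
        have hax : a = fB x := psiB_injOn (hA'sub haA') (fB_mem hxI hxh) ha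
        exact ⟨x, ⟨by rw [Set.mem_preimage, ← hax]; exact haA', hxI, hxh⟩, rfl⟩
    calc μ (fB ⁻¹' A) = μ S := hpre
      _ = volume (psiB '' S) := by rw [hμ]; exact mu_eq_volume_image hSm hSsub
      _ = volume {y : ℝ | y ≠ 0 ∧ TBo y ∈ B} := by rw [him]
      _ = volume B := volume_preimage_TBo hBm
      _ = μ A' := by rw [hμ]; exact (mu_eq_volume_image hA'm hA'sub).symm
      _ = μ A := hAA'.symm
  · -- infinite total measure
    have h1 : psiB '' Set.Ioo (0:ℝ) 1 = Set.univ := by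
      apply Set.eq_univ_of_forall
      intro y
      obtain ⟨x, hx, he⟩ := psiB_surj y
      exact ⟨x, hx, he⟩
    have h2 : μ (Set.Ioo (0:ℝ) 1) = ⊤ := by
      rw [hμ, mu_eq_volume_image measurableSet_Ioo (subset_refl _), h1, Real.volume_univ]
    exact top_le_iff.mp (h2 ▸ measure_mono Set.Ioo_subset_Icc_self)
  · -- finite measure of [γ, f γ]
    have hs2a : (4:ℝ)/3 ≤ Real.sqrt 2 := by
      nlinarith [Real.sq_sqrt (by norm_num : (2:ℝ) ≥ 0), Real.sqrt_nonneg 2]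
    have hs2b : Real.sqrt 2 ≤ 3/2 := by
      nlinarith [Real.sq_sqrt (by norm_num : (2:ℝ) ≥ 0), Real.sqrt_nonneg 2]
    have key : ∀ x ∈ Set.Icc (Real.sqrt 2 - 1) (2 - Real.sqrt 2),
        ENNReal.ofReal (1/x^2 + 1/(1-x)^2) ≤ (18:ENNReal) := by
      intro x hx
      obtain ⟨hx1, hx2⟩ := hx
      have hxl : (1:ℝ)/3 ≤ x := by linarith
      have hxu : x ≤ 2/3 := by linarith
      have h1x : (1:ℝ)/3 ≤ 1 - x := by linarith
      have hb1 : 1/x^2 ≤ 9 := by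
        rw [div_le_iff₀ (by positivity)]
        nlinarith
      have hb2 : 1/(1-x)^2 ≤ 9 := by
        rw [div_le_iff₀ (by positivity)]
        nlinarith
      calc ENNReal.ofReal (1/x^2 + 1/(1-x)^2) ≤ ENNReal.ofReal 18 :=
            ENNReal.ofReal_le_ofReal (by linarith)
        _ = (18:ENNReal) := by norm_num
    rw [hμ, withDensity_apply _ measurableSet_Icc]
    calc ∫⁻ x in Set.Icc (Real.sqrt 2 - 1) (2 - Real.sqrt 2),
          ENNReal.ofReal (1/x^2 + 1/(1-x)^2) ∂(volume.restrict (Set.Icc (0:ℝ) 1))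
        ≤ ∫⁻ _ in Set.Icc (Real.sqrt 2 - 1) (2 - Real.sqrt 2),
          (18:ENNReal) ∂(volume.restrict (Set.Icc (0:ℝ) 1)) :=
          setLIntegral_mono measurable_const key
      _ = 18 * (volume.restrict (Set.Icc (0:ℝ) 1))
          (Set.Icc (Real.sqrt 2 - 1) (2 - Real.sqrt 2)) := setLIntegral_const _ _
      _ ≤ 18 * volume (Set.Icc (Real.sqrt 2 - 1) (2 - Real.sqrt 2)) := by
          gcongr
          exact Measure.restrict_le_self
      _ < ⊤ := ENNReal.mul_lt_top (by norm_num) measure_Icc_lt_top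
end
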